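/- arXiv:1512.03484 — 9 statements merged into one kernel-verified Lean document; each statement's English description precedes it below -/
import Mathlib

section
/- For every load-balancing instance (any number m ≥ 1 of identical machines and any jobs with positive real weights), every potential-optimal allocation A satisfies makespan(A) ≤ (4/3) · OPT. (Equivalently: the inefficiency ratio of stable equilibria in load balancing games is at most 4/3.) -/
open Finset

/-- The load of machine `j` under allocation `A`: the sum of weights of jobs assigned to `j`. -/
noncomputable def load (n m : ℕ) (w : Fin n → ℝ) (A : Fin n → Fin m) (j : Fin m) : ℝ :=
  ∑ i ∈ Finset.univ.filter (fun i => A i = j), w i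

/-- The makespan of allocation `A`: the maximum machine load. -/
noncomputable def makespan (n m : ℕ) (w : Fin n → ℝ) (A : Fin n → Fin m) : ℝ :=
  ⨆ j : Fin m, load n m w A j

/-- The potential of allocation `A`: the sum of squared machine loads. -/
noncomputable def potential (n m : ℕ) (w : Fin n → ℝ) (A : Fin n → Fin m) : ℝ :=
  ∑ j : Fin m, (load n m w A j) ^ 2

/-- The optimal makespan of the instance: the minimum makespan over all allocations. -/
noncomputable def optMakespan (n m : ℕ) (w : Fin n → ℝ) : ℝ :=
  ⨅ B : Fin n → Fin m, makespan n m w B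

section Helpers

variable {n m : ℕ} {w : Fin n → ℝ}

lemma load_eq_sum_ite (B : Fin n → Fin m) (x : Fin m) :
    load n m w B x = ∑ i, if B i = x then w i else 0 := by
  rw [load, Finset.sum_filter]

lemma load_nonneg (hw : ∀ i, 0 < w i) (B : Fin n → Fin m) (x : Fin m) :
    0 ≤ load n m w B x :=
  Finset.sum_nonneg (fun i _ => (hw i).le)

lemma sum_load (B : Fin n → Fin m) : ∑ x, load n m w B x = ∑ i, w i := by
  unfold load
  exact Finset.sum_fiberwise _ _ _

lemma sum_le_load (hw : ∀ i, 0 < w i) (B : Fin n → Fin m) (s : Finset (Fin n)) (j : Fin m)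
    (h : ∀ i ∈ s, B i = j) : ∑ i ∈ s, w i ≤ load n m w B j := by
  apply Finset.sum_le_sum_of_subset_of_nonneg
  · intro i hi
    simp only [Finset.mem_filter, Finset.mem_univ, true_and]
    exact h i hi
  · intro i _ _
    exact (hw i).le

lemma load_modified (A C : Fin n → Fin m) (U : Finset (Fin n))
    (h : ∀ i, i ∉ U → C i = A i) (x : Fin m) :
    load n m w C x
      = load n m w A x - (∑ i ∈ U, if A i = x then w i else 0)
          + (∑ i ∈ U, if C i = x then w i else 0) := by
  have hU : univ.filter (fun i => i ∈ U) = U := by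
    ext i; simp
  have hsplitC := Finset.sum_filter_add_sum_filter_not univ (fun i => i ∈ U)
      (fun i => if C i = x then w i else 0)
  have hsplitA := Finset.sum_filter_add_sum_filter_not univ (fun i => i ∈ U)
      (fun i => if A i = x then w i else 0)
  have hsame : ∑ i ∈ univ.filter (fun i => ¬ i ∈ U), (if C i = x then w i else 0)
      = ∑ i ∈ univ.filter (fun i => ¬ i ∈ U), (if A i = x then w i else 0) := by
    apply Finset.sum_congr rfl
    intro i hi
    rw [h i (by simpa using (Finset.mem_filter.mp hi).2)]
  rw [load_eq_sum_ite, load_eq_sum_ite, ← hsplitC, ← hsplitA, hU, hsame]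
  ring

lemma pot_local (A : Fin n → Fin m)
    (hA : ∀ B : Fin n → Fin m, potential n m w A ≤ potential n m w B)
    (C : Fin n → Fin m) (K : Finset (Fin m))
    (hsame : ∀ x, x ∉ K → load n m w C x = load n m w A x) :
    ∑ x ∈ K, (load n m w A x)^2 ≤ ∑ x ∈ K, (load n m w C x)^2 := by
  have h := hA C
  unfold potential at h
  have hK : univ.filter (fun x => x ∈ K) = K := by ext x; simp
  have hsplitC := Finset.sum_filter_add_sum_filter_not univ (fun x => x ∈ K)
      (fun x => (load n m w C x)^2)
  have hsplitA := Finset.sum_filter_add_sum_filter_not univ (fun x => x ∈ K)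
      (fun x => (load n m w A x)^2)
  have heq : ∑ x ∈ univ.filter (fun x => ¬ x ∈ K), (load n m w C x)^2
      = ∑ x ∈ univ.filter (fun x => ¬ x ∈ K), (load n m w A x)^2 := by
    apply Finset.sum_congr rfl
    intro x hx
    rw [hsame x (by simpa using (Finset.mem_filter.mp hx).2)]
  rw [← hsplitA, ← hsplitC, hK, heq] at h
  linarith

lemma move_one (hw : ∀ i, 0 < w i) (A : Fin n → Fin m)
    (hA : ∀ B : Fin n → Fin m, potential n m w A ≤ potential n m w B)
    (i₀ : Fin n) (x : Fin m) (hx : x ≠ A i₀) :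
    load n m w A (A i₀) ≤ load n m w A x + w i₀ := by
  set C : Fin n → Fin m := fun i => if i = i₀ then x else A i with hC
  have hout : ∀ i, i ∉ ({i₀} : Finset (Fin n)) → C i = A i := by
    intro i hi
    simp only [Finset.mem_singleton] at hi
    simp [hC, hi]
  have hload : ∀ y, load n m w C y
      = load n m w A y - (if A i₀ = y then w i₀ else 0) + (if x = y then w i₀ else 0) := by
    intro y
    rw [load_modified A C {i₀} hout y]
    simp [hC]
  have hsame : ∀ y, y ∉ ({A i₀, x} : Finset (Fin m)) → load n m w C y = load n m w A y := by
    intro y hy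
    simp only [Finset.mem_insert, Finset.mem_singleton] at hy
    push_neg at hy
    rw [hload y, if_neg (fun h => hy.1 h.symm), if_neg (fun h => hy.2 h.symm)]
    ring
  have key := pot_local A hA C {A i₀, x} hsame
  rw [Finset.sum_pair (fun h => hx (h.symm)), Finset.sum_pair (fun h => hx (h.symm))] at key
  rw [hload (A i₀), hload x] at key
  rw [if_pos rfl, if_neg hx, if_neg (fun h : A i₀ = x => hx h.symm), if_pos rfl] at key
  nlinarith [hw i₀]

lemma zone_lemma (hw : ∀ i, 0 < w i) (A : Fin n → Fin m)
    (hA : ∀ B : Fin n → Fin m, potential n m w A ≤ potential n m w B)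
    {p : Fin m} {iw : Fin n} (hiw : A iw = p) {j : Fin m} (hj : j ≠ p)
    (T : Finset (Fin n)) (hT : ∀ i ∈ T, A i = j) :
    (∑ i ∈ T, w i) ≤ load n m w A j - (load n m w A p - w iw)
      ∨ w iw ≤ ∑ i ∈ T, w i := by
  set σ := ∑ i ∈ T, w i with hσ
  by_cases hcmp : w iw ≤ σ
  · exact Or.inr hcmp
  push_neg at hcmp
  left
  have hiwT : iw ∉ T := by
    intro h
    exact hj ((hT iw h).symm.trans hiw)
  set C : Fin n → Fin m := fun i => if i = iw then j else if i ∈ T then p else A i with hC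
  set U : Finset (Fin n) := insert iw T with hU
  have hout : ∀ i, i ∉ U → C i = A i := by
    intro i hi
    simp only [hU, Finset.mem_insert] at hi
    push_neg at hi
    simp [hC, hi.1, hi.2]
  have hsumA : ∀ y, (∑ i ∈ U, if A i = y then w i else 0)
      = (if p = y then w iw else 0) + (if j = y then σ else 0) := by
    intro y
    rw [hU, Finset.sum_insert hiwT, hiw]
    congr 1
    by_cases hjy : j = y
    · rw [if_pos hjy, hσ]
      apply Finset.sum_congr rfl
      intro i hi; rw [if_pos (by rw [hT i hi, hjy])]
    · rw [if_neg hjy]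
      apply Finset.sum_eq_zero
      intro i hi; rw [if_neg (by rw [hT i hi]; exact hjy)]
  have hsumC : ∀ y, (∑ i ∈ U, if C i = y then w i else 0)
      = (if j = y then w iw else 0) + (if p = y then σ else 0) := by
    intro y
    rw [hU, Finset.sum_insert hiwT]
    have : C iw = j := by simp [hC]
    rw [this]
    congr 1
    by_cases hpy : p = y
    · rw [if_pos hpy, hσ]
      apply Finset.sum_congr rfl
      intro i hi
      have : C i = p := by
        simp only [hC]
        rw [if_neg (fun h : i = iw => hiwT (h ▸ hi)), if_pos hi]
      rw [if_pos (by rw [this, hpy])]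
    · rw [if_neg hpy]
      apply Finset.sum_eq_zero
      intro i hi
      have : C i = p := by
        simp only [hC]
        rw [if_neg (fun h : i = iw => hiwT (h ▸ hi)), if_pos hi]
      rw [if_neg (by rw [this]; exact hpy)]
  have hload : ∀ y, load n m w C y
      = load n m w A y - ((if p = y then w iw else 0) + (if j = y then σ else 0))
        + ((if j = y then w iw else 0) + (if p = y then σ else 0)) := by
    intro y
    rw [load_modified A C U hout y, hsumA y, hsumC y]
  have hsame : ∀ y, y ∉ ({p, j} : Finset (Fin m)) → load n m w C y = load n m w A y := by
    intro y hy
    simp only [Finset.mem_insert, Finset.mem_singleton] at hy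
    push_neg at hy
    rw [hload y]
    simp only [if_neg (show ¬(p = y) from fun h => hy.1 h.symm),
      if_neg (show ¬(j = y) from fun h => hy.2 h.symm)]
    ring
  have key := pot_local A hA C {p, j} hsame
  rw [Finset.sum_pair (Ne.symm hj), Finset.sum_pair (Ne.symm hj)] at key
  rw [hload p, hload j] at key
  rw [if_pos rfl, if_neg hj, if_neg (Ne.symm hj), if_pos rfl] at key
  rw [if_neg (Ne.symm hj), if_pos rfl, if_pos rfl, if_neg hj] at key
  set L := load n m w A p
  set lj := load n m w A j
  nlinarith [hw iw, key]

lemma cascade (hw : ∀ i, 0 < w i) (A : Fin n → Fin m)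
    (hA : ∀ B : Fin n → Fin m, potential n m w A ≤ potential n m w B)
    {p : Fin m} {iw : Fin n} (hiw : A iw = p) {j : Fin m} (hj : j ≠ p)
    {r : Fin m} (hrp : r ≠ p) (hrj : r ≠ j)
    (T : Finset (Fin n)) (hT : ∀ i ∈ T, A i = j)
    {ξ : Fin n} (hξ : A ξ = j) (hξT : ξ ∉ T)
    (h1 : (∑ i ∈ T, w i) ≤ load n m w A j - (load n m w A p - w iw))
    (h2 : w iw ≤ (∑ i ∈ T, w i) + w ξ) :
    load n m w A p ≤ load n m w A r + w ξ := by
  set σ := ∑ i ∈ T, w i with hσ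
  have hiwξ : iw ≠ ξ := by
    intro h; rw [h, hξ] at hiw; exact hj hiw
  have hiwT : iw ∉ T := by
    intro h; exact hj ((hT iw h).symm.trans hiw)
  have hiwU : iw ∉ insert ξ T := by simp [hiwξ, hiwT]
  set C : Fin n → Fin m :=
    fun i => if i = iw then j else if i = ξ then r else if i ∈ T then p else A i with hC
  set U : Finset (Fin n) := insert iw (insert ξ T) with hU
  have hout : ∀ i, i ∉ U → C i = A i := by
    intro i hi
    simp only [hU, Finset.mem_insert] at hi
    push_neg at hi
    simp [hC, hi.1, hi.2.1, hi.2.2]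
  have hCT : ∀ i ∈ T, C i = p := by
    intro i hi
    simp only [hC]
    rw [if_neg (fun h : i = iw => hiwT (h ▸ hi)), if_neg (fun h : i = ξ => hξT (h ▸ hi)),
      if_pos hi]
  have hsumA : ∀ y, (∑ i ∈ U, if A i = y then w i else 0)
      = (if p = y then w iw else 0) + ((if j = y then w ξ else 0) + (if j = y then σ else 0)) := by
    intro y
    rw [hU, Finset.sum_insert hiwU, Finset.sum_insert hξT, hiw, hξ]
    congr 1
    congr 1
    by_cases hjy : j = y
    · rw [if_pos hjy, hσ]
      exact Finset.sum_congr rfl (fun i hi => by rw [if_pos (by rw [hT i hi, hjy])])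
    · rw [if_neg hjy]
      exact Finset.sum_eq_zero (fun i hi => by rw [if_neg (by rw [hT i hi]; exact hjy)])
  have hsumC : ∀ y, (∑ i ∈ U, if C i = y then w i else 0)
      = (if j = y then w iw else 0) + ((if r = y then w ξ else 0) + (if p = y then σ else 0)) := by
    intro y
    rw [hU, Finset.sum_insert hiwU, Finset.sum_insert hξT]
    have hciw : C iw = j := by simp [hC]
    have hcξ : C ξ = r := by simp [hC, hiwξ.symm, Ne.symm hiwξ]
    rw [hciw, hcξ]
    congr 1
    congr 1
    by_cases hpy : p = y
    · rw [if_pos hpy, hσ]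
      exact Finset.sum_congr rfl (fun i hi => by rw [if_pos (by rw [hCT i hi, hpy])])
    · rw [if_neg hpy]
      exact Finset.sum_eq_zero (fun i hi => by rw [if_neg (by rw [hCT i hi]; exact hpy)])
  have hload : ∀ y, load n m w C y
      = load n m w A y
        - ((if p = y then w iw else 0) + ((if j = y then w ξ else 0) + (if j = y then σ else 0)))
        + ((if j = y then w iw else 0) + ((if r = y then w ξ else 0) + (if p = y then σ else 0))) := by
    intro y
    rw [load_modified A C U hout y, hsumA y, hsumC y]
  have hsame : ∀ y, y ∉ ({p, j, r} : Finset (Fin m)) → load n m w C y = load n m w A y := by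
    intro y hy
    simp only [Finset.mem_insert, Finset.mem_singleton] at hy
    push_neg at hy
    rw [hload y]
    simp only [if_neg (show ¬(p = y) from fun h => hy.1 h.symm),
      if_neg (show ¬(j = y) from fun h => hy.2.1 h.symm),
      if_neg (show ¬(r = y) from fun h => hy.2.2 h.symm)]
    ring
  have key := pot_local A hA C {p, j, r} hsame
  have hpmem : p ∉ ({j, r} : Finset (Fin m)) := by simp [Ne.symm hj, Ne.symm hrp]
  have hjmem : j ∉ ({r} : Finset (Fin m)) := by simp [Ne.symm hrj]
  rw [Finset.sum_insert hpmem, Finset.sum_insert hjmem, Finset.sum_singleton,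
    Finset.sum_insert hpmem, Finset.sum_insert hjmem, Finset.sum_singleton] at key
  rw [hload p, hload j, hload r] at key
  simp only [if_pos rfl, if_neg hj, if_neg (Ne.symm hj), if_neg hrp, if_neg (Ne.symm hrp),
    if_neg hrj, if_neg (Ne.symm hrj), if_true, add_zero, zero_add] at key
  set L := load n m w A p
  set lj := load n m w A j
  set lr := load n m w A r
  by_contra hlt
  push_neg at hlt
  have hd0 : 0 ≤ σ + w ξ - w iw := by linarith
  have hd1 : 0 ≤ (w ξ - (L - lj)) - (σ + w ξ - w iw) := by linarith
  nlinarith [mul_nonneg hd0 hd1, mul_pos (hw ξ) (show 0 < L - (lr + w ξ) by linarith), hw ξ, hw iw]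

lemma crossing {α : Type*} [DecidableEq α] (F : Finset α) (f : α → ℝ)
    (lo hi : ℝ) (hpos : 0 < hi)
    (hzone : ∀ T ⊆ F, (∑ i ∈ T, f i) ≤ lo ∨ hi ≤ ∑ i ∈ T, f i)
    (hF : hi ≤ ∑ i ∈ F, f i) :
    ∃ T ⊆ F, ∃ ξ ∈ F, ξ ∉ T ∧ (∑ i ∈ T, f i) ≤ lo ∧ hi ≤ (∑ i ∈ T, f i) + f ξ := by
  classical
  set P := F.powerset.filter (fun U => hi ≤ ∑ i ∈ U, f i) with hP
  have hPne : P.Nonempty := ⟨F, by simp [hP, hF]⟩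
  obtain ⟨U, hUP, hUmin⟩ := Finset.exists_min_image P Finset.card hPne
  simp only [hP, Finset.mem_filter, Finset.mem_powerset] at hUP
  obtain ⟨hUF, hUsum⟩ := hUP
  have hUne : U.Nonempty := by
    rcases U.eq_empty_or_nonempty with h | h
    · rw [h] at hUsum; simp at hUsum; linarith
    · exact h
  obtain ⟨ξ, hξU⟩ := hUne
  refine ⟨U.erase ξ, (Finset.erase_subset _ _).trans hUF, ξ, hUF hξU,
    Finset.notMem_erase _ _, ?_, ?_⟩
  · have hTsub : U.erase ξ ⊆ F := (Finset.erase_subset _ _).trans hUF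
    rcases hzone (U.erase ξ) hTsub with h | h
    · exact h
    · exfalso
      have hmem : U.erase ξ ∈ P := by
        simp only [hP, Finset.mem_filter, Finset.mem_powerset]
        exact ⟨hTsub, h⟩
      have := hUmin _ hmem
      have hcard : (U.erase ξ).card < U.card := Finset.card_erase_lt_of_mem hξU
      omega
  · rw [Finset.sum_erase_add _ _ hξU]
    exact hUsum

end Helpers

/-- Every potential-optimal allocation has makespan at most `4/3 · OPT`
(the IRSE of load balancing games is at most `4/3`). -/
theorem irse_upper_bound (m n : ℕ) (hm : 1 ≤ m) (w : Fin n → ℝ) (hw : ∀ i, 0 < w i)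
    (A : Fin n → Fin m)
    (hA : ∀ B : Fin n → Fin m, potential n m w A ≤ potential n m w B) :
    makespan n m w A ≤ (4 / 3) * optMakespan n m w := by
  have hmne : Nonempty (Fin m) := ⟨⟨0, hm⟩⟩
  -- the critical machine p
  obtain ⟨p, hp⟩ := Finite.exists_max (load n m w A)
  have hbddA : BddAbove (Set.range (load n m w A)) := Set.Finite.bddAbove (Set.finite_range _)
  have hLm : makespan n m w A = load n m w A p :=
    le_antisymm (ciSup_le hp) (le_ciSup hbddA p)
  -- an optimal allocation
  obtain ⟨Bopt, hBopt⟩ := Finite.exists_min (fun B : Fin n → Fin m => makespan n m w B)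
  have hms_nonneg : ∀ B : Fin n → Fin m, 0 ≤ makespan n m w B := by
    intro B
    have := le_ciSup (Set.Finite.bddAbove (Set.finite_range (load n m w B))) (Classical.arbitrary (Fin m))
    exact le_trans (load_nonneg hw B _) this
  have htm : optMakespan n m w = makespan n m w Bopt := by
    apply le_antisymm
    · exact ciInf_le ⟨0, fun y ⟨B, hB⟩ => hB ▸ hms_nonneg B⟩ Bopt
    · exact le_ciInf hBopt
  rw [hLm, htm]
  set t := makespan n m w Bopt with htdef
  set L := load n m w A p with hLdef
  by_contra hcon
  push_neg at hcon
  -- basic facts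
  have ht0 : 0 ≤ t := hms_nonneg Bopt
  have hLpos : 0 < L := lt_of_le_of_lt (by positivity) hcon
  have htL : t < L := by
    have : t ≤ 4/3 * t := by linarith
    linarith
  have hBload : ∀ x, load n m w Bopt x ≤ t :=
    fun x => le_ciSup (Set.Finite.bddAbove (Set.finite_range (load n m w Bopt))) x
  have hjob : ∀ i, w i ≤ t := by
    intro i
    have h1 : w i ≤ load n m w Bopt (Bopt i) := by
      have := sum_le_load hw Bopt {i} (Bopt i) (by simp)
      simpa using this
    exact le_trans h1 (hBload _)
  have hWt : ∑ i, w i ≤ (m : ℝ) * t := by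
    have h1 : ∑ x, load n m w Bopt x ≤ ∑ _x : Fin m, t :=
      Finset.sum_le_sum (fun x _ => hBload x)
    rw [sum_load] at h1
    simpa [Finset.sum_const, Finset.card_univ, nsmul_eq_mul] using h1
  have h43 : 4 * t < 3 * L := by linarith
  -- fiber of p
  have hfpne : (univ.filter (fun i => A i = p)).Nonempty := by
    by_contra h
    rw [Finset.not_nonempty_iff_eq_empty] at h
    have : L = 0 := by rw [hLdef, load, h, Finset.sum_empty]
    linarith
  have htpos : 0 < t := by
    obtain ⟨i0, _⟩ := hfpne
    exact lt_of_lt_of_le (hw i0) (hjob i0)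
  have hcard2 : 2 ≤ (univ.filter (fun i => A i = p)).card := by
    by_contra h
    push_neg at h
    interval_cases hc : (univ.filter (fun i => A i = p)).card
    · rw [Finset.card_eq_zero] at hc
      have : L = 0 := by rw [hLdef, load, hc, Finset.sum_empty]
      linarith
    · rw [Finset.card_eq_one] at hc
      obtain ⟨i, hi⟩ := hc
      have : L = w i := by rw [hLdef, load, hi, Finset.sum_singleton]
      have := hjob i
      linarith
  obtain ⟨iw, hiwmem, hiwmin⟩ := Finset.exists_min_image (univ.filter (fun i => A i = p)) w hfpne
  have hiwp : A iw = p := (Finset.mem_filter.mp hiwmem).2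
  -- Nash property
  have hNash : ∀ jj, jj ≠ p → L ≤ load n m w A jj + w iw := by
    intro jj hjj
    have := move_one hw A hA iw jj (by rw [hiwp]; exact hjj)
    rw [hiwp] at this
    exact this
  -- least loaded machine
  have hqex : ∃ q, load n m w A q ≤ t := by
    by_contra h
    push_neg at h
    have h1 : ∑ _x : Fin m, t < ∑ x, load n m w A x := by
      apply Finset.sum_lt_sum_of_nonempty (Finset.univ_nonempty)
      intro x _
      exact h x
    rw [sum_load] at h1
    have : ∑ _x : Fin m, t = (m : ℝ) * t := by
      simp [Finset.sum_const, Finset.card_univ, nsmul_eq_mul]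
    linarith [hWt]
  obtain ⟨q, hqt⟩ := hqex
  have hqp : q ≠ p := by
    intro h
    rw [h] at hqt
    rw [← hLdef] at hqt
    linarith
  have hαww : L - t ≤ w iw := by
    have := hNash q hqp
    linarith
  have hαpos : 0 < L - t := by linarith
  -- two jobs on p
  have hww2 : 2 * w iw ≤ L := by
    obtain ⟨x, hx, y, hy, hxy⟩ := Finset.one_lt_card.mp (by omega : 1 < (univ.filter (fun i => A i = p)).card)
    have hsum : w x + w y ≤ L := by
      have h1 := sum_le_load hw A {x, y} p (by
        intro i hi
        simp only [Finset.mem_insert, Finset.mem_singleton] at hi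
        rcases hi with h | h
        · rw [h]; exact (Finset.mem_filter.mp hx).2
        · rw [h]; exact (Finset.mem_filter.mp hy).2)
      rw [Finset.sum_pair hxy] at h1
      exact h1
    have := hiwmin x hx
    have := hiwmin y hy
    linarith
  have hu_half : L ≤ 2 * (L - w iw) := by linarith
  set sthr := max (2 * t - L) (t / 2) with hsthrdef
  have hsthr_u : sthr < L - w iw := by
    apply max_lt
    · linarith
    · linarith
  have hsthr_t2 : t / 2 ≤ sthr := le_max_right _ _
  have hsthr_2tL : 2 * t - L ≤ sthr := le_max_left _ _
  -- existence of a cascade target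
  have hrex : ∀ jj, jj ≠ p → ∃ r, r ≠ p ∧ r ≠ jj ∧ load n m w A r ≤ t := by
    intro jj hjj
    by_contra h
    push_neg at h
    have hpjj : p ≠ jj := Ne.symm hjj
    have hsd : ∑ r ∈ univ \ {p, jj}, load n m w A r + ∑ r ∈ ({p, jj} : Finset (Fin m)), load n m w A r
        = ∑ r, load n m w A r := Finset.sum_sdiff (Finset.subset_univ _)
    have hpair : ∑ r ∈ ({p, jj} : Finset (Fin m)), load n m w A r = L + load n m w A jj := by
      rw [Finset.sum_pair hpjj]
    have hceq : (univ \ {p, jj}).card = m - 2 := by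
      rw [Finset.card_sdiff_of_subset (Finset.subset_univ _), Finset.card_univ, Fintype.card_fin,
        Finset.card_pair hpjj]
    have hm2 : 2 ≤ m := by
      have := Finset.card_le_card (Finset.subset_univ ({p, jj} : Finset (Fin m)))
      rw [Finset.card_pair hpjj, Finset.card_univ, Fintype.card_fin] at this
      exact this
    have hsdl : ((m : ℝ) - 2) * t ≤ ∑ r ∈ univ \ {p, jj}, load n m w A r := by
      have h1 : ∀ r ∈ univ \ {p, jj}, t ≤ load n m w A r := by
        intro r hr
        simp only [Finset.mem_sdiff, Finset.mem_univ, true_and, Finset.mem_insert,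
          Finset.mem_singleton] at hr
        push_neg at hr
        exact (h r hr.1 hr.2).le
      have h2 : ∑ _r ∈ univ \ {p, jj}, t ≤ ∑ r ∈ univ \ {p, jj}, load n m w A r :=
        Finset.sum_le_sum h1
      rw [Finset.sum_const, hceq, nsmul_eq_mul] at h2
      have : ((m - 2 : ℕ) : ℝ) = (m : ℝ) - 2 := by
        rw [Nat.cast_sub hm2]; norm_num
      rw [this] at h2
      exact h2
    have hNjj := hNash jj hjj
    have hsumw : ∑ r, load n m w A r ≤ (m : ℝ) * t := by rw [sum_load]; exact hWt
    have hwiw2 : w iw ≤ L / 2 := by linarith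
    linarith
  -- goods and supers
  set G := univ.filter (fun i => L - t ≤ w i) with hGdef
  set SS := univ.filter (fun i => sthr < w i) with hSSdef
  -- maximal machines carry at least 3 credits
  have hsthr_L2 : sthr < L / 2 := by
    apply max_lt
    · linarith
    · linarith
  have hmax3 : ∀ jj, load n m w A jj = L →
      3 ≤ (G.filter (fun i => A i = jj)).card + (SS.filter (fun i => A i = jj)).card := by
    intro jj hjL
    have hqjj : q ≠ jj := by
      intro h
      rw [h, hjL] at hqt
      linarith
    have hall : ∀ i, A i = jj → L - t ≤ w i := by
      intro i hi
      have h1 := move_one hw A hA i q (by rw [hi]; exact hqjj)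
      rw [hi, hjL] at h1
      linarith [hqt]
    have hsubG : univ.filter (fun i => A i = jj) ⊆ G.filter (fun i => A i = jj) := by
      intro i hi
      simp only [Finset.mem_filter, Finset.mem_univ, true_and] at hi
      simp only [Finset.mem_filter, hGdef, Finset.mem_univ, true_and]
      exact ⟨hall i hi, hi⟩
    have hfcard : 2 ≤ (univ.filter (fun i => A i = jj)).card := by
      by_contra h
      push_neg at h
      interval_cases hc : (univ.filter (fun i => A i = jj)).card
      · rw [Finset.card_eq_zero] at hc
        have : load n m w A jj = 0 := by rw [load, hc, Finset.sum_empty]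
        rw [hjL] at this
        linarith
      · rw [Finset.card_eq_one] at hc
        obtain ⟨i, hi⟩ := hc
        have : load n m w A jj = w i := by rw [load, hi, Finset.sum_singleton]
        rw [hjL] at this
        have := hjob i
        linarith
    by_cases h3 : 3 ≤ (univ.filter (fun i => A i = jj)).card
    · have := Finset.card_le_card hsubG
      omega
    · have h2 : (univ.filter (fun i => A i = jj)).card = 2 := by omega
      obtain ⟨x, y, hxy, hset⟩ := Finset.card_eq_two.mp h2
      have hxmem : A x = jj := by
        have : x ∈ univ.filter (fun i => A i = jj) := by rw [hset]; simp
        simpa using this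
      have hymem : A y = jj := by
        have : y ∈ univ.filter (fun i => A i = jj) := by rw [hset]; simp
        simpa using this
      have hsum : w x + w y = L := by
        have : load n m w A jj = w x + w y := by rw [load, hset, Finset.sum_pair hxy]
        rw [hjL] at this
        linarith
      have hbig : ∃ zz, A zz = jj ∧ sthr < w zz := by
        rcases le_total (w x) (w y) with hle | hle
        · exact ⟨y, hymem, by linarith [hsthr_L2]⟩
        · exact ⟨x, hxmem, by linarith [hsthr_L2]⟩
      obtain ⟨zz, hzzm, hzzb⟩ := hbig
      have hScard : 1 ≤ (SS.filter (fun i => A i = jj)).card := by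
        apply Finset.card_pos.mpr
        exact ⟨zz, by simp [hSSdef, hzzb, hzzm]⟩
      have hGcard : 2 ≤ (G.filter (fun i => A i = jj)).card := by
        have := Finset.card_le_card hsubG
        omega
      omega
  -- all other machines carry at least 2 credits
  have hcA : ∀ jj, 2 ≤ (G.filter (fun i => A i = jj)).card + (SS.filter (fun i => A i = jj)).card := by
    intro jj
    by_cases hjL : load n m w A jj = L
    · exact le_trans (by norm_num) (hmax3 jj hjL)
    have hjjp : jj ≠ p := by
      intro h
      rw [h, ← hLdef] at hjL
      exact hjL rfl
    have hNjj : L - w iw ≤ load n m w A jj := by linarith [hNash jj hjjp]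
    set BG := (univ.filter (fun i => A i = jj)).filter (fun i => w iw ≤ w i) with hBGdef
    have hBGsubG : BG ⊆ G.filter (fun i => A i = jj) := by
      intro i hi
      simp only [hBGdef, Finset.mem_filter, Finset.mem_univ, true_and] at hi
      simp only [hGdef, Finset.mem_filter, Finset.mem_univ, true_and]
      exact ⟨by linarith [hi.2], hi.1⟩
    by_cases hBG2 : 2 ≤ BG.card
    · have := Finset.card_le_card hBGsubG
      omega
    by_cases hBG1 : BG.card = 1
    · obtain ⟨X, hX⟩ := Finset.card_eq_one.mp hBG1
      have hXmem : A X = jj ∧ w iw ≤ w X := by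
        have : X ∈ BG := by rw [hX]; simp
        simp only [hBGdef, Finset.mem_filter, Finset.mem_univ, true_and] at this
        exact this
      have hXG : X ∈ G.filter (fun i => A i = jj) := by
        simp only [hGdef, Finset.mem_filter, Finset.mem_univ, true_and]
        exact ⟨by linarith [hXmem.2], hXmem.1⟩
      by_cases hXs : sthr < w X
      · have hXS : X ∈ SS.filter (fun i => A i = jj) := by
          simp only [hSSdef, Finset.mem_filter, Finset.mem_univ, true_and]
          exact ⟨hXs, hXmem.1⟩
        have h1 : 1 ≤ (G.filter (fun i => A i = jj)).card := Finset.card_pos.mpr ⟨X, hXG⟩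
        have h2 : 1 ≤ (SS.filter (fun i => A i = jj)).card := Finset.card_pos.mpr ⟨X, hXS⟩
        omega
      push_neg at hXs
      set smalls := (univ.filter (fun i => A i = jj)).erase X with hsm
      have hsmsub : ∀ i ∈ smalls, A i = jj := by
        intro i hi
        have := Finset.mem_of_mem_erase hi
        simpa using this
      have hXfib : X ∈ univ.filter (fun i => A i = jj) := by simp [hXmem.1]
      have hsumsm : ∑ i ∈ smalls, w i = load n m w A jj - w X := by
        have h1 := Finset.sum_erase_add (univ.filter (fun i => A i = jj)) w hXfib
        rw [load]
        rw [hsm]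
        linarith
      have hzoneT : ∀ T ⊆ smalls,
          (∑ i ∈ T, w i) ≤ load n m w A jj - (L - w iw) ∨ w iw ≤ ∑ i ∈ T, w i := by
        intro T hT
        have := zone_lemma hw A hA hiwp hjjp T (fun i hi => hsmsub i (hT hi))
        rw [← hLdef] at this
        exact this
      have hsmw : w iw ≤ ∑ i ∈ smalls, w i := by
        rcases hzoneT smalls (Finset.Subset.refl _) with hc | hc
        · exfalso
          rw [hsumsm] at hc
          have : L - w iw ≤ w X := by linarith
          linarith [hsthr_u]
        · exact hc
      obtain ⟨T, hTsub, ξ, hξmem, hξT, hT1, hT2⟩ :=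
        crossing smalls w (load n m w A jj - (L - w iw)) (w iw) (hw iw) hzoneT hsmw
      obtain ⟨r, hrp, hrjj, hrt⟩ := hrex jj hjjp
      have hcas := cascade hw A hA hiwp hjjp hrp hrjj T (fun i hi => hsmsub i (hTsub hi))
        (hsmsub ξ hξmem) hξT (by rw [← hLdef]; exact hT1) hT2
      rw [← hLdef] at hcas
      have hξα : L - t ≤ w ξ := by linarith [hrt]
      have hξG : ξ ∈ G.filter (fun i => A i = jj) := by
        simp only [hGdef, Finset.mem_filter, Finset.mem_univ, true_and]
        exact ⟨hξα, hsmsub ξ hξmem⟩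
      have hξX : ξ ≠ X := by
        rw [hsm] at hξmem
        exact Finset.ne_of_mem_erase hξmem
      have hsub2 : ({ξ, X} : Finset (Fin n)) ⊆ G.filter (fun i => A i = jj) := by
        intro i hi
        simp only [Finset.mem_insert, Finset.mem_singleton] at hi
        rcases hi with h | h
        · rw [h]; exact hξG
        · rw [h]; exact hXG
      have h2 : 2 ≤ (G.filter (fun i => A i = jj)).card := by
        have := Finset.card_le_card hsub2
        rw [Finset.card_pair hξX] at this
        exact this
      omega
    have hBG0 : BG = ∅ := by
      rw [← Finset.card_eq_zero]
      omega
    have hsmall_all : ∀ i, A i = jj → w i < w iw := by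
      intro i hi
      by_contra hge
      push_neg at hge
      have : i ∈ BG := by simp [hBGdef, hi, hge]
      rw [hBG0] at this
      simp at this
    set tins := (univ.filter (fun i => A i = jj)).filter (fun i => ¬ (L - t ≤ w i)) with htinsdef
    set goods := (univ.filter (fun i => A i = jj)).filter (fun i => L - t ≤ w i) with hgoodsdef
    have htinsub : ∀ i ∈ tins, A i = jj := by
      intro i hi
      simp only [htinsdef, Finset.mem_filter, Finset.mem_univ, true_and] at hi
      exact hi.1
    have htinsum : ∑ i ∈ tins, w i ≤ load n m w A jj - (L - w iw) := by
      by_contra hcc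
      push_neg at hcc
      have hzoneT : ∀ T ⊆ tins,
          (∑ i ∈ T, w i) ≤ load n m w A jj - (L - w iw) ∨ w iw ≤ ∑ i ∈ T, w i := by
        intro T hT
        have := zone_lemma hw A hA hiwp hjjp T (fun i hi => htinsub i (hT hi))
        rw [← hLdef] at this
        exact this
      have hsmw : w iw ≤ ∑ i ∈ tins, w i := by
        rcases hzoneT tins (Finset.Subset.refl _) with hc | hc
        · linarith
        · exact hc
      obtain ⟨T, hTsub, ξ, hξmem, hξT, hT1, hT2⟩ :=
        crossing tins w (load n m w A jj - (L - w iw)) (w iw) (hw iw) hzoneT hsmw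
      obtain ⟨r, hrp, hrjj, hrt⟩ := hrex jj hjjp
      have hcas := cascade hw A hA hiwp hjjp hrp hrjj T (fun i hi => htinsub i (hTsub hi))
        (htinsub ξ hξmem) hξT (by rw [← hLdef]; exact hT1) hT2
      rw [← hLdef] at hcas
      have hξα : L - t ≤ w ξ := by linarith [hrt]
      have : ¬ (L - t ≤ w ξ) := by
        have := hξmem
        simp only [htinsdef, Finset.mem_filter, Finset.mem_univ, true_and] at this
        exact this.2
      exact this hξα
    have hsplitsum : (∑ i ∈ goods, w i) + (∑ i ∈ tins, w i) = load n m w A jj := by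
      rw [hgoodsdef, htinsdef, load]
      exact Finset.sum_filter_add_sum_filter_not _ _ _
    have hgsum : L - w iw ≤ ∑ i ∈ goods, w i := by linarith
    have hgcard : 2 ≤ goods.card := by
      by_contra hc
      push_neg at hc
      interval_cases hgc : goods.card
      · rw [Finset.card_eq_zero] at hgc
        rw [hgc, Finset.sum_empty] at hgsum
        linarith
      · rw [Finset.card_eq_one] at hgc
        obtain ⟨y, hy⟩ := hgc
        have hymem : A y = jj := by
          have : y ∈ goods := by rw [hy]; simp
          simp only [hgoodsdef, Finset.mem_filter, Finset.mem_univ, true_and] at this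
          exact this.1
        rw [hy, Finset.sum_singleton] at hgsum
        have h1 := hsmall_all y hymem
        linarith
    have hgeq : goods = G.filter (fun i => A i = jj) := by
      ext i
      simp only [hgoodsdef, hGdef, Finset.mem_filter, Finset.mem_univ, true_and]
      tauto
    rw [← hgeq]
    omega
  -- every machine of the optimal allocation carries at most 2 credits
  have hcB : ∀ jj, (G.filter (fun i => Bopt i = jj)).card + (SS.filter (fun i => Bopt i = jj)).card ≤ 2 := by
    intro jj
    set g := G.filter (fun i => Bopt i = jj) with hgdef
    set s2 := SS.filter (fun i => Bopt i = jj) with hs2def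
    have hGmem : ∀ i ∈ g, L - t ≤ w i ∧ Bopt i = jj := by
      intro i hi
      simp only [hgdef, hGdef, Finset.mem_filter, Finset.mem_univ, true_and] at hi
      tauto
    have hSmem : ∀ i ∈ s2, sthr < w i ∧ Bopt i = jj := by
      intro i hi
      simp only [hs2def, hSSdef, Finset.mem_filter, Finset.mem_univ, true_and] at hi
      tauto
    have hpair : ∀ x y : Fin n, x ≠ y → Bopt x = jj → Bopt y = jj → w x + w y ≤ t := by
      intro x y hxy hx hy
      have h1 := sum_le_load hw Bopt {x, y} jj (by
        intro i hi
        simp only [Finset.mem_insert, Finset.mem_singleton] at hi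
        rcases hi with h | h
        · rw [h]; exact hx
        · rw [h]; exact hy)
      rw [Finset.sum_pair hxy] at h1
      exact le_trans h1 (hBload jj)
    have htrip : ∀ x y z : Fin n, x ≠ y → x ≠ z → y ≠ z →
        Bopt x = jj → Bopt y = jj → Bopt z = jj → w x + w y + w z ≤ t := by
      intro x y z hxy hxz hyz hx hy hz
      have h1 := sum_le_load hw Bopt {x, y, z} jj (by
        intro i hi
        simp only [Finset.mem_insert, Finset.mem_singleton] at hi
        rcases hi with h | h | h
        · rw [h]; exact hx
        · rw [h]; exact hy
        · rw [h]; exact hz)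
      rw [Finset.sum_insert (by simp [hxy, hxz]), Finset.sum_pair hyz] at h1
      have := le_trans h1 (hBload jj)
      linarith
    have hS1 : s2.card ≤ 1 := by
      by_contra hc
      push_neg at hc
      obtain ⟨x, hx, y, hy, hxy⟩ := Finset.one_lt_card.mp hc
      have h1 := hpair x y hxy (hSmem x hx).2 (hSmem y hy).2
      have h2 := (hSmem x hx).1
      have h3 := (hSmem y hy).1
      linarith [hsthr_t2]
    rcases Nat.eq_zero_or_pos s2.card with h0 | h1
    · have hg2 : g.card ≤ 2 := by
        by_contra hc
        push_neg at hc
        obtain ⟨x, y, z, hx, hy, hz, hxy, hxz, hyz⟩ := Finset.two_lt_card_iff.mp hc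
        have h1 := htrip x y z hxy hxz hyz (hGmem x hx).2 (hGmem y hy).2 (hGmem z hz).2
        have h2 := (hGmem x hx).1
        have h3 := (hGmem y hy).1
        have h4 := (hGmem z hz).1
        linarith [h43]
      omega
    · obtain ⟨z, hzmem⟩ := Finset.card_pos.mp h1
      have hg1 : g.card ≤ 1 := by
        by_contra hc
        push_neg at hc
        obtain ⟨x, hx, y, hy, hxy⟩ := Finset.one_lt_card.mp hc
        have hy'ex : ∃ y', y' ∈ g ∧ y' ≠ z := by
          by_cases hxz : x = z
          · exact ⟨y, hy, fun h => hxy (hxz.trans h.symm)⟩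
          · exact ⟨x, hx, hxz⟩
        obtain ⟨y', hy', hy'z⟩ := hy'ex
        have h1 := hpair y' z hy'z (hGmem y' hy').2 (hSmem z hzmem).2
        have h2 := (hGmem y' hy').1
        have h3 := (hSmem z hzmem).1
        linarith [hsthr_2tL]
      omega
  -- counting
  have hGA : G.card = ∑ jj, (G.filter (fun i => A i = jj)).card :=
    Finset.card_eq_sum_card_fiberwise (fun x _ => Finset.mem_univ (A x))
  have hSA : SS.card = ∑ jj, (SS.filter (fun i => A i = jj)).card :=
    Finset.card_eq_sum_card_fiberwise (fun x _ => Finset.mem_univ (A x))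
  have hGB : G.card = ∑ jj, (G.filter (fun i => Bopt i = jj)).card :=
    Finset.card_eq_sum_card_fiberwise (fun x _ => Finset.mem_univ (Bopt x))
  have hSB : SS.card = ∑ jj, (SS.filter (fun i => Bopt i = jj)).card :=
    Finset.card_eq_sum_card_fiberwise (fun x _ => Finset.mem_univ (Bopt x))
  have hupper : G.card + SS.card ≤ 2 * m := by
    have h1 : ∑ jj, ((G.filter (fun i => Bopt i = jj)).card + (SS.filter (fun i => Bopt i = jj)).card) ≤ 2 * m := by
      calc ∑ jj, ((G.filter (fun i => Bopt i = jj)).card + (SS.filter (fun i => Bopt i = jj)).card)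
          ≤ ∑ _jj : Fin m, 2 := Finset.sum_le_sum (fun jj _ => hcB jj)
        _ = 2 * m := by simp [Finset.sum_const, Finset.card_univ, Nat.smul_one_eq_cast]; ring
    rw [hGB, hSB, ← Finset.sum_add_distrib]
    exact h1
  have hlower : 2 * m + 1 ≤ G.card + SS.card := by
    have hsplit : ((G.filter (fun i => A i = p)).card + (SS.filter (fun i => A i = p)).card)
        + ∑ jj ∈ univ.erase p, ((G.filter (fun i => A i = jj)).card + (SS.filter (fun i => A i = jj)).card)
        = ∑ jj, ((G.filter (fun i => A i = jj)).card + (SS.filter (fun i => A i = jj)).card) :=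
      Finset.add_sum_erase univ
        (fun jj => (G.filter (fun i => A i = jj)).card + (SS.filter (fun i => A i = jj)).card)
        (Finset.mem_univ p)
    have h2 : (univ.erase p).card • 2
        ≤ ∑ jj ∈ univ.erase p, ((G.filter (fun i => A i = jj)).card + (SS.filter (fun i => A i = jj)).card) :=
      Finset.card_nsmul_le_sum _ _ _ (fun jj _ => hcA jj)
    have h3 : (univ.erase p).card = m - 1 := by
      rw [Finset.card_erase_of_mem (Finset.mem_univ p), Finset.card_univ, Fintype.card_fin]
    have h4 : 3 ≤ (G.filter (fun i => A i = p)).card + (SS.filter (fun i => A i = p)).card :=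
      hmax3 p rfl
    have h5 : ∑ jj, ((G.filter (fun i => A i = jj)).card + (SS.filter (fun i => A i = jj)).card)
        = G.card + SS.card := by
      rw [Finset.sum_add_distrib, ← hGA, ← hSA]
    rw [h3] at h2
    simp only [smul_eq_mul] at h2
    omega
  omega
end

section
/- For every integer k ≥ 2, the instance I_k admits a potential-optimal allocation whose makespan equals (7k−1)/2; namely, the allocation in which one machine holds the job of weight (5k−1)/2 together with one job of weight k (load (7k−1)/2), and the remaining 2k jobs are placed in pairs {k, 2k−1}, {k, 2k−1}, {k+1, 2k−2}, {k+1, 2k−2}, …, one pair per machine, so that each of the other k machines has load 3k−1, minimizes the potential among all allocations of I_k. -/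
open Finset

/-- The weights of the instance `I_k`: jobs `0,…,k−1` have weights `k, k+1, …, 2k−1`
(first copies), jobs `k,…,2k−1` have weights `k, k+1, …, 2k−1` (second copies),
job `2k` has weight `k` (third copy of `k`), and job `2k+1` has weight `(5k−1)/2`.
Altogether: three jobs of weight `k`, two jobs of weight `j` for each `k+1 ≤ j ≤ 2k−1`,
and one job of weight `(5k−1)/2`. -/
noncomputable def wIk (k : ℕ) : Fin (2 * k + 2) → ℝ := fun i =>
  if (i : ℕ) < k then (k : ℝ) + (i : ℕ)
  else if (i : ℕ) < 2 * k then (k : ℝ) + (((i : ℕ) - k : ℕ) : ℝ)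
  else if (i : ℕ) = 2 * k then (k : ℝ)
  else (5 * (k : ℝ) - 1) / 2

/-- The allocation of `I_k` from the lower-bound construction: machine `k` holds the job of
weight `(5k−1)/2` together with one job of weight `k`, and each machine `j < k` holds the
pair of jobs of weights `k + j` and `2k − 1 − j` (total load `3k − 1`). -/
def AIk (k : ℕ) : Fin (2 * k + 2) → Fin (k + 1) := fun i =>
  if h1 : (i : ℕ) < k then ⟨(i : ℕ), by omega⟩
  else if h2 : (i : ℕ) < 2 * k then ⟨2 * k - 1 - (i : ℕ), by omega⟩
  else ⟨k, by omega⟩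

lemma wIk_ge (k : ℕ) (i : Fin (2 * k + 2)) (hi : (i : ℕ) ≠ 2 * k + 1) : (k : ℝ) ≤ wIk k i := by
  have := i.isLt
  unfold wIk
  split_ifs with h1 h2 h3
  · have : (0:ℝ) ≤ ((i:ℕ):ℝ) := Nat.cast_nonneg _
    linarith
  · have : (0:ℝ) ≤ (((i:ℕ) - k : ℕ):ℝ) := Nat.cast_nonneg _
    linarith
  · exact le_refl _
  · exact absurd (by omega : (i:ℕ) = 2 * k + 1) hi

lemma wIk_nonneg (k : ℕ) (hk : 2 ≤ k) (i : Fin (2 * k + 2)) : 0 ≤ wIk k i := by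
  rcases eq_or_ne (i : ℕ) (2 * k + 1) with h | h
  · unfold wIk
    have hk' : (2:ℝ) ≤ (k:ℝ) := by exact_mod_cast hk
    split_ifs <;> first | linarith | omega
  · have hk' : (0:ℝ) ≤ (k:ℝ) := Nat.cast_nonneg _
    linarith [wIk_ge k i h]

lemma filter_AIk_last (k : ℕ) (hk : 2 ≤ k) :
    Finset.univ.filter (fun i => AIk k i = ⟨k, Nat.lt_succ_self k⟩) =
      ({⟨2 * k, by omega⟩, ⟨2 * k + 1, by omega⟩} : Finset (Fin (2 * k + 2))) := by
  ext i
  have := i.isLt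
  simp only [mem_filter, mem_univ, true_and, mem_insert, mem_singleton, Fin.ext_iff, AIk]
  split_ifs <;> simp <;> omega

lemma filter_AIk_lt (k : ℕ) (hk : 2 ≤ k) (j : Fin (k + 1)) (hj : (j : ℕ) < k) :
    Finset.univ.filter (fun i => AIk k i = j) =
      ({⟨(j : ℕ), by omega⟩, ⟨2 * k - 1 - (j : ℕ), by omega⟩} : Finset (Fin (2 * k + 2))) := by
  ext i
  have := i.isLt
  simp only [mem_filter, mem_univ, true_and, mem_insert, mem_singleton, Fin.ext_iff, AIk]
  split_ifs <;> simp <;> omega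

lemma load_AIk_last (k : ℕ) (hk : 2 ≤ k) :
    load (2 * k + 2) (k + 1) (wIk k) (AIk k) ⟨k, Nat.lt_succ_self k⟩ = (7 * (k : ℝ) - 1) / 2 := by
  unfold load
  rw [filter_AIk_last k hk, Finset.sum_pair (by simp [Fin.ext_iff])]
  have h1 : wIk k ⟨2 * k, by omega⟩ = (k : ℝ) := by
    unfold wIk; simp only [Fin.val_mk]
    rw [if_neg (by omega), if_neg (by omega)]; norm_num
  have h2 : wIk k ⟨2 * k + 1, by omega⟩ = (5 * (k : ℝ) - 1) / 2 := by
    unfold wIk; simp only [Fin.val_mk]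
    rw [if_neg (by omega), if_neg (by omega), if_neg (by omega)]
  rw [h1, h2]; ring

lemma load_AIk_lt (k : ℕ) (hk : 2 ≤ k) (j : Fin (k + 1)) (hj : (j : ℕ) < k) :
    load (2 * k + 2) (k + 1) (wIk k) (AIk k) j = 3 * (k : ℝ) - 1 := by
  unfold load
  rw [filter_AIk_lt k hk j hj, Finset.sum_pair (by simp [Fin.ext_iff]; omega)]
  have h1 : wIk k ⟨(j : ℕ), by omega⟩ = (k : ℝ) + (j : ℕ) := by
    unfold wIk; simp only [Fin.val_mk]
    rw [if_pos hj]
  have h2 : wIk k ⟨2 * k - 1 - (j : ℕ), by omega⟩ = (k : ℝ) + ((k - 1 - (j : ℕ) : ℕ) : ℝ) := by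
    unfold wIk; simp only [Fin.val_mk]
    rw [if_neg (by omega), if_pos (by omega)]
    congr 2
    omega
  rw [h1, h2]
  have : ((j:ℕ) : ℝ) + ((k - 1 - (j : ℕ) : ℕ) : ℝ) = (k : ℝ) - 1 := by
    have : ((j:ℕ) + (k - 1 - (j:ℕ)) : ℕ) = k - 1 := by omega
    have h3 := congrArg (Nat.cast (R := ℝ)) this
    push_cast [Nat.cast_sub (by omega : 1 ≤ k)] at h3
    linarith
  linarith

lemma sum_load_eq (n m : ℕ) (w : Fin n → ℝ) (B : Fin n → Fin m) :
    ∑ j : Fin m, load n m w B j = ∑ i, w i := by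
  unfold load
  exact Finset.sum_fiberwise _ _ _

lemma potential_AIk (k : ℕ) (hk : 2 ≤ k) :
    potential (2 * k + 2) (k + 1) (wIk k) (AIk k) =
      (k : ℝ) * (3 * (k : ℝ) - 1) ^ 2 + ((7 * (k : ℝ) - 1) / 2) ^ 2 := by
  unfold potential
  rw [Fin.sum_univ_castSucc]
  have h1 : ∀ j : Fin k, load (2 * k + 2) (k + 1) (wIk k) (AIk k) (Fin.castSucc j)
      = 3 * (k : ℝ) - 1 := fun j => load_AIk_lt k hk _ j.isLt
  have h2 : (Fin.last k) = (⟨k, Nat.lt_succ_self k⟩ : Fin (k+1)) := rfl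
  simp only [h1, h2, load_AIk_last k hk]
  rw [Finset.sum_const, Finset.card_univ, Fintype.card_fin]
  simp [nsmul_eq_mul]

lemma totW (k : ℕ) (hk : 2 ≤ k) :
    ∑ i, wIk k i = (k : ℝ) * (3 * (k : ℝ) - 1) + (7 * (k : ℝ) - 1) / 2 := by
  rw [← sum_load_eq (2 * k + 2) (k + 1) (wIk k) (AIk k)]
  rw [Fin.sum_univ_castSucc]
  have h1 : ∀ j : Fin k, load (2 * k + 2) (k + 1) (wIk k) (AIk k) (Fin.castSucc j)
      = 3 * (k : ℝ) - 1 := fun j => load_AIk_lt k hk _ j.isLt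
  have h2 : (Fin.last k) = (⟨k, Nat.lt_succ_self k⟩ : Fin (k+1)) := rfl
  simp only [h1, h2, load_AIk_last k hk]
  rw [Finset.sum_const, Finset.card_univ, Fintype.card_fin]
  simp [nsmul_eq_mul]

lemma main_ineq (k : ℕ) (hk : 2 ≤ k) (B : Fin (2 * k + 2) → Fin (k + 1)) :
    potential (2 * k + 2) (k + 1) (wIk k) (AIk k) ≤ potential (2 * k + 2) (k + 1) (wIk k) B := by
  set K : ℝ := (k : ℝ) with hKdef
  have hK : (2 : ℝ) ≤ K := by rw [hKdef]; exact_mod_cast hk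
  set W : ℝ := ∑ i, wIk k i with hWdef
  have hW : W = K * (3 * K - 1) + (7 * K - 1) / 2 := totW k hk
  set big : Fin (2 * k + 2) := ⟨2 * k + 1, by omega⟩ with hbigdef
  set M : Fin (k + 1) := B big with hMdef
  set t : ℝ := load (2 * k + 2) (k + 1) (wIk k) B M with htdef
  set SS : ℝ := ∑ j ∈ Finset.univ.erase M, (load (2 * k + 2) (k + 1) (wIk k) B j) ^ 2 with hSSdef
  have hsplit : potential (2 * k + 2) (k + 1) (wIk k) B = t ^ 2 + SS := by
    unfold potential
    rw [← Finset.add_sum_erase Finset.univ _ (Finset.mem_univ M)]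
  have hsum_erase : ∑ j ∈ Finset.univ.erase M, load (2 * k + 2) (k + 1) (wIk k) B j = W - t := by
    have h := sum_load_eq (2 * k + 2) (k + 1) (wIk k) B
    rw [← Finset.add_sum_erase Finset.univ _ (Finset.mem_univ M)] at h
    rw [← hWdef] at h
    linarith
  have hcard : (Finset.univ.erase M).card = k := by
    rw [Finset.card_erase_of_mem (Finset.mem_univ M), Finset.card_univ, Fintype.card_fin]
    omega
  have hCS : (W - t) ^ 2 ≤ K * SS := by
    have h := sq_sum_le_card_mul_sum_sq (s := Finset.univ.erase M)
      (f := load (2 * k + 2) (k + 1) (wIk k) B)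
    rw [hcard, hsum_erase] at h
    exact_mod_cast h
  -- structure of t
  have hbig_mem : big ∈ Finset.univ.filter (fun i => B i = M) := by
    simp [hMdef]
  have hwbig : wIk k big = (5 * K - 1) / 2 := by
    unfold wIk
    simp only [hbigdef, Fin.val_mk]
    rw [if_neg (by omega), if_neg (by omega), if_neg (by omega)]
  have ht : t = (5 * K - 1) / 2 +
      ∑ i ∈ (Finset.univ.filter (fun i => B i = M)).erase big, wIk k i := by
    rw [htdef]
    unfold load
    rw [← Finset.add_sum_erase _ _ hbig_mem, hwbig]
  rcases Finset.eq_empty_or_nonempty ((Finset.univ.filter (fun i => B i = M)).erase big)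
    with hemp | ⟨i0, hi0⟩
  · have ht0 : t = (5 * K - 1) / 2 := by rw [ht, hemp]; simp
    rw [hsplit, potential_AIk k hk, ht0]
    nlinarith [hCS, hK, sq_nonneg (W - t), sq_nonneg K]
  · have hi0ne : (i0 : ℕ) ≠ 2 * k + 1 := by
      intro h
      have : i0 = big := Fin.ext h
      exact (Finset.ne_of_mem_erase hi0) this
    have hge : K ≤ ∑ i ∈ (Finset.univ.filter (fun i => B i = M)).erase big, wIk k i :=
      le_trans (wIk_ge k i0 hi0ne)
        (Finset.single_le_sum (fun i _ => wIk_nonneg k hk i) hi0)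
    have ht1 : (7 * K - 1) / 2 ≤ t := by rw [ht]; linarith
    rw [hsplit, potential_AIk k hk]
    have h2 : 0 ≤ (K + 1) * (t + (7 * K - 1) / 2) - 2 * W := by
      nlinarith [mul_nonneg (by linarith : (0:ℝ) ≤ K + 1) (by linarith : (0:ℝ) ≤ t - (7 * K - 1) / 2)]
    nlinarith [hCS, mul_nonneg (by linarith : (0:ℝ) ≤ t - (7 * K - 1) / 2) h2, hK]

/-- For every `k ≥ 2`, the allocation `AIk k` of the instance `I_k` has the
machine holding the big job at load `(7k−1)/2`, all other machines at load `3k−1`, its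
makespan equals `(7k−1)/2`, and it minimizes the potential among all allocations of `I_k`. -/
theorem Ik_potential_optimal (k : ℕ) (hk : 2 ≤ k) :
    load (2 * k + 2) (k + 1) (wIk k) (AIk k) ⟨k, Nat.lt_succ_self k⟩ = (7 * (k : ℝ) - 1) / 2 ∧
    (∀ j : Fin (k + 1), (j : ℕ) < k →
      load (2 * k + 2) (k + 1) (wIk k) (AIk k) j = 3 * (k : ℝ) - 1) ∧
    makespan (2 * k + 2) (k + 1) (wIk k) (AIk k) = (7 * (k : ℝ) - 1) / 2 ∧
    (∀ B : Fin (2 * k + 2) → Fin (k + 1),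
      potential (2 * k + 2) (k + 1) (wIk k) (AIk k) ≤ potential (2 * k + 2) (k + 1) (wIk k) B) := by
  refine ⟨load_AIk_last k hk, fun j hj => load_AIk_lt k hk j hj, ?_, fun B => main_ineq k hk B⟩
  unfold makespan
  apply le_antisymm
  · apply ciSup_le
    intro j
    rcases lt_or_eq_of_le (Nat.lt_succ_iff.mp j.isLt) with h | h
    · rw [load_AIk_lt k hk j h]
      have : (2:ℝ) ≤ (k:ℝ) := by exact_mod_cast hk
      linarith
    · have hj : j = ⟨k, Nat.lt_succ_self k⟩ := Fin.ext h
      rw [hj, load_AIk_last k hk]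
  · have h := le_ciSup (f := load (2 * k + 2) (k + 1) (wIk k) (AIk k))
      (Set.Finite.bddAbove (Set.finite_range _)) ⟨k, Nat.lt_succ_self k⟩
    rw [load_AIk_last k hk] at h
    exact h
end

section
/- For every integer m ≥ 3 there exist a number of jobs n, positive real job weights w : Fin n → ℝ on m machines, and a potential-optimal allocation A of this instance such that makespan(A) ≥ ((7m − 8)/(6m − 6)) · OPT. -/
open Finset

/-- machine index function for the potential-optimal allocation A -/
def aF (m i : ℕ) : ℕ :=
  if i = 0 ∨ i = 3 then 0
  else if i = 1 ∨ i = 4 then 1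
  else if i = 2 ∨ i = 5 then 2
  else if i < m + 3 then i - 3
  else 2*m + 2 - i

lemma aF_lt (m : ℕ) (hm : 3 ≤ m) (i : ℕ) (hi : i < 2*m) : aF m i < m := by
  unfold aF; split_ifs <;> omega

/-- the weights -/
noncomputable def wF (m i : ℕ) : ℝ :=
  if i = 0 then 5*m - 6
  else if i ≤ 2 then 4*m - 6
  else if i ≤ 5 then 2*m - 2
  else if i < m + 3 then 2*m + 2*i - 12
  else 2*i - 6

noncomputable def instW (m : ℕ) : Fin (2*m) → ℝ := fun i => wF m i.1

def instA (m : ℕ) (hm : 3 ≤ m) : Fin (2*m) → Fin m :=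
  fun i => ⟨aF m i.1, aF_lt m hm i.1 i.isLt⟩

lemma wF_pos (m : ℕ) (hm : 3 ≤ m) (i : ℕ) : 0 < wF m i := by
  have hm' : (3:ℝ) ≤ (m:ℝ) := by exact_mod_cast hm
  unfold wF
  split_ifs with h1 h2 h3 h4
  · linarith
  · linarith
  · linarith
  · have : (6:ℝ) ≤ (i:ℝ) := by exact_mod_cast (by omega : 6 ≤ i)
    linarith
  · have : (6:ℝ) ≤ (i:ℝ) := by exact_mod_cast (by omega : 6 ≤ i)
    linarith

lemma wF_min (m : ℕ) (hm : 3 ≤ m) (i : ℕ) (hi : i ≠ 0) : 2*(m:ℝ) - 2 ≤ wF m i := by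
  have hm' : (3:ℝ) ≤ (m:ℝ) := by exact_mod_cast hm
  unfold wF
  split_ifs with h1 h2 h3 h4
  · omega
  · linarith
  · linarith
  · have : (6:ℝ) ≤ (i:ℝ) := by exact_mod_cast (by omega : 6 ≤ i)
    linarith
  · have : ((m:ℝ)+3) ≤ (i:ℝ) := by exact_mod_cast (by omega : m+3 ≤ i)
    linarith

lemma loadA (m : ℕ) (hm : 3 ≤ m) (v : Fin m) :
    load (2*m) m (instW m) (instA m hm) v = if v.1 = 0 then 7*(m:ℝ) - 8 else 6*(m:ℝ) - 8 := by
  have hv := v.isLt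
  have hm' : (3:ℝ) ≤ (m:ℝ) := by exact_mod_cast hm
  unfold load
  by_cases h0 : v.1 = 0
  · have hfilt : (univ.filter (fun i => instA m hm i = v)) =
        {(⟨0, by omega⟩ : Fin (2*m)), ⟨3, by omega⟩} := by
      ext i
      have hi := i.isLt
      simp only [mem_filter, mem_univ, true_and, mem_insert, mem_singleton, instA,
        Fin.ext_iff]
      show aF m i.1 = v.1 ↔ i.1 = 0 ∨ i.1 = 3
      unfold aF; split_ifs <;> omega
    rw [hfilt, Finset.sum_pair (by simp [Fin.ext_iff])]
    simp only [instW, wF]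
    rw [if_pos h0]
    norm_num <;> ring
  · rw [if_neg h0]
    rcases Nat.lt_or_ge v.1 3 with h3 | h3
    · -- v.1 = 1 or 2
      rcases (by omega : v.1 = 1 ∨ v.1 = 2) with h | h
      · have hfilt : (univ.filter (fun i => instA m hm i = v)) =
            {(⟨1, by omega⟩ : Fin (2*m)), ⟨4, by omega⟩} := by
          ext i
          have hi := i.isLt
          simp only [mem_filter, mem_univ, true_and, mem_insert, mem_singleton, instA,
            Fin.ext_iff]
          show aF m i.1 = v.1 ↔ i.1 = 1 ∨ i.1 = 4
          unfold aF; split_ifs <;> omega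
        rw [hfilt, Finset.sum_pair (by simp [Fin.ext_iff])]
        simp only [instW, wF]
        norm_num <;> ring
      · have hfilt : (univ.filter (fun i => instA m hm i = v)) =
            {(⟨2, by omega⟩ : Fin (2*m)), ⟨5, by omega⟩} := by
          ext i
          have hi := i.isLt
          simp only [mem_filter, mem_univ, true_and, mem_insert, mem_singleton, instA,
            Fin.ext_iff]
          show aF m i.1 = v.1 ↔ i.1 = 2 ∨ i.1 = 5
          unfold aF; split_ifs <;> omega
        rw [hfilt, Finset.sum_pair (by simp [Fin.ext_iff])]
        simp only [instW, wF]
        norm_num <;> ring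
    · -- 3 ≤ v.1 < m
      have hfilt : (univ.filter (fun i => instA m hm i = v)) =
          {(⟨v.1 + 3, by omega⟩ : Fin (2*m)), ⟨2*m + 2 - v.1, by omega⟩} := by
        ext i
        have hi := i.isLt
        simp only [mem_filter, mem_univ, true_and, mem_insert, mem_singleton, instA,
          Fin.ext_iff]
        show aF m i.1 = v.1 ↔ i.1 = v.1 + 3 ∨ i.1 = 2*m + 2 - v.1
        unfold aF; split_ifs <;> omega
      rw [hfilt, Finset.sum_pair (by simp only [ne_eq, Fin.mk.injEq]; omega)]
      simp only [instW, wF]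
      have hcast : ((2*m + 2 - v.1 : ℕ) : ℝ) = 2*(m:ℝ) + 2 - (v.1:ℝ) := by
        have : (v.1:ℝ) ≤ 2*(m:ℝ) + 2 := by exact_mod_cast (by omega : v.1 ≤ 2*m+2)
        push_cast [Nat.cast_sub (by omega : v.1 ≤ 2*m+2)]
        ring
      split_ifs <;> first
        | (exfalso; omega)
        | contradiction
        | (rw [hcast]; push_cast; ring)
        | (push_cast; ring)

lemma sum_ifzero (m : ℕ) (hm : 3 ≤ m) (X Y : ℝ) :
    ∑ v : Fin m, (if v.1 = 0 then X else Y) = X + ((m:ℝ)-1) * Y := by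
  set z : Fin m := ⟨0, by omega⟩ with hz
  rw [← Finset.add_sum_erase _ _ (mem_univ z)]
  have h2 : ∀ v ∈ univ.erase z, (if v.1 = 0 then X else Y) = Y := by
    intro v hv
    rw [if_neg]
    intro h
    exact (Finset.ne_of_mem_erase hv) (Fin.ext (by simp [hz, h]))
  rw [if_pos rfl, Finset.sum_congr rfl h2, Finset.sum_const,
    Finset.card_erase_of_mem (mem_univ z), Finset.card_univ, Fintype.card_fin, nsmul_eq_mul,
    Nat.cast_sub (by omega : 1 ≤ m)]
  norm_num

lemma sum_loadA (m : ℕ) (hm : 3 ≤ m) :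
    ∑ v : Fin m, load (2*m) m (instW m) (instA m hm) v = 6*(m:ℝ)^2 - 7*m := by
  rw [Finset.sum_congr rfl fun v _ => loadA m hm v, sum_ifzero m hm _ _]
  ring

lemma sumW (m : ℕ) (hm : 3 ≤ m) :
    ∑ i : Fin (2*m), instW m i = 6*(m:ℝ)^2 - 7*m := by
  calc ∑ i : Fin (2*m), instW m i
      = ∑ v : Fin m, load (2*m) m (instW m) (instA m hm) v :=
        (Finset.sum_fiberwise _ _ _).symm
    _ = 6*(m:ℝ)^2 - 7*m := sum_loadA m hm

lemma potA (m : ℕ) (hm : 3 ≤ m) :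
    potential (2*m) m (instW m) (instA m hm)
      = (7*(m:ℝ)-8)^2 + ((m:ℝ)-1) * (6*(m:ℝ)-8)^2 := by
  unfold potential
  rw [Finset.sum_congr rfl fun v _ => by
    rw [loadA m hm v, apply_ite (· ^ 2)]]
  rw [sum_ifzero m hm _ _]

lemma potB_ge (m : ℕ) (hm : 3 ≤ m) (B : Fin (2*m) → Fin m) :
    (7*(m:ℝ)-8)^2 + ((m:ℝ)-1) * (6*(m:ℝ)-8)^2 ≤ potential (2*m) m (instW m) B := by
  have hm' : (3:ℝ) ≤ (m:ℝ) := by exact_mod_cast hm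
  set L : Fin m → ℝ := load (2*m) m (instW m) B with hL
  set μ : ℝ := 6*(m:ℝ) - 7 with hμ
  -- total load
  have hsum : ∑ v : Fin m, L v = (m:ℝ) * μ := by
    calc ∑ v : Fin m, L v = ∑ i : Fin (2*m), instW m i := Finset.sum_fiberwise _ _ _
      _ = 6*(m:ℝ)^2 - 7*m := sumW m hm
      _ = (m:ℝ) * μ := by rw [hμ]; ring
  have hdevsum : ∑ v : Fin m, (L v - μ) = 0 := by
    rw [Finset.sum_sub_distrib, hsum, Finset.sum_const, Finset.card_univ, Fintype.card_fin,
      nsmul_eq_mul]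
    ring
  set i0 : Fin (2*m) := ⟨0, by omega⟩ with hi0
  set j0 : Fin m := B i0 with hj0
  -- deviation of machine j0 is at least m-1 in absolute value
  have hdev : ((m:ℝ)-1)^2 ≤ (L j0 - μ)^2 := by
    have hmem : i0 ∈ univ.filter (fun i => B i = j0) := by
      simp [Finset.mem_filter, hj0]
    have hw0 : instW m i0 = 5*(m:ℝ) - 6 := by
      simp [hi0, instW, wF]
    by_cases hS : univ.filter (fun i => B i = j0) = {i0}
    · have : L j0 = 5*(m:ℝ) - 6 := by
        rw [hL]; unfold load; rw [hS, Finset.sum_singleton, hw0]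
      rw [this, hμ]; nlinarith
    · obtain ⟨x, hxmem, hxne⟩ : ∃ x ∈ univ.filter (fun i => B i = j0), x ≠ i0 := by
        by_contra hcon
        push_neg at hcon
        exact hS (Finset.eq_singleton_iff_unique_mem.2 ⟨hmem, hcon⟩)
      have hsub : ({i0, x} : Finset (Fin (2*m))) ⊆ univ.filter (fun i => B i = j0) := by
        intro y hy
        rcases Finset.mem_insert.1 hy with h | h
        · rwa [h]
        · rwa [Finset.mem_singleton.1 h]
      have hge : instW m i0 + instW m x ≤ L j0 := by
        rw [hL]; unfold load
        calc instW m i0 + instW m x = ∑ i ∈ ({i0, x} : Finset (Fin (2*m))), instW m i := by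
              rw [Finset.sum_pair (Ne.symm hxne)]
          _ ≤ _ := Finset.sum_le_sum_of_subset_of_nonneg hsub
              (fun i _ _ => le_of_lt (wF_pos m hm i.1))
      have hwx : 2*(m:ℝ) - 2 ≤ instW m x := by
        apply wF_min m hm
        intro h
        exact hxne (Fin.ext (by simp [hi0, h]))
      have h78 : 7*(m:ℝ) - 8 ≤ L j0 := by rw [hw0] at hge; linarith
      rw [hμ]; nlinarith
  -- Cauchy–Schwarz on the other machines
  have hkey : ((m:ℝ)-1)^2 + ((m:ℝ)-1) ≤ ∑ v : Fin m, (L v - μ)^2 := by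
    have hcard : ((univ : Finset (Fin m)).erase j0).card = m - 1 := by
      rw [Finset.card_erase_of_mem (mem_univ j0), Finset.card_univ, Fintype.card_fin]
    have hrest : ∑ v ∈ univ.erase j0, (L v - μ) = -(L j0 - μ) := by
      have h0 : (L j0 - μ) + ∑ v ∈ univ.erase j0, (L v - μ) = ∑ v : Fin m, (L v - μ) :=
        Finset.add_sum_erase univ (fun v => L v - μ) (mem_univ j0)
      rw [hdevsum] at h0
      linarith
    have hcs : (L j0 - μ)^2 ≤ ((m:ℝ)-1) * ∑ v ∈ univ.erase j0, (L v - μ)^2 := by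
      have h := Finset.sum_mul_sq_le_sq_mul_sq (univ.erase j0) (fun _ => (1:ℝ))
        (fun v => L v - μ)
      simp only [one_mul, one_pow, Finset.sum_const, hcard, nsmul_eq_mul, mul_one] at h
      rw [hrest, neg_sq] at h
      calc (L j0 - μ)^2 ≤ ((m-1 : ℕ):ℝ) * ∑ v ∈ univ.erase j0, (L v - μ)^2 := h
        _ = ((m:ℝ)-1) * ∑ v ∈ univ.erase j0, (L v - μ)^2 := by
            rw [Nat.cast_sub (by omega : 1 ≤ m)]; norm_num
    have hrestge : ((m:ℝ)-1) ≤ ∑ v ∈ univ.erase j0, (L v - μ)^2 := by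
      have hpos : (0:ℝ) < (m:ℝ) - 1 := by linarith
      nlinarith
    calc ((m:ℝ)-1)^2 + ((m:ℝ)-1)
        ≤ (L j0 - μ)^2 + ∑ v ∈ univ.erase j0, (L v - μ)^2 := by
          exact add_le_add hdev hrestge
      _ = ∑ v : Fin m, (L v - μ)^2 := by
          exact Finset.add_sum_erase univ (fun v => (L v - μ)^2) (mem_univ j0)
  -- reassemble the potential
  have hpot : potential (2*m) m (instW m) B
      = (∑ v : Fin m, (L v - μ)^2) + (m:ℝ) * μ^2 := by
    unfold potential
    have : ∀ v : Fin m, (L v)^2 = (L v - μ)^2 + 2*μ*(L v - μ) + μ^2 := by intro v; ring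
    rw [Finset.sum_congr rfl fun v _ => this v]
    rw [Finset.sum_add_distrib, Finset.sum_add_distrib, ← Finset.mul_sum, hdevsum,
      Finset.sum_const, Finset.card_univ, Fintype.card_fin, nsmul_eq_mul]
    ring
  rw [hpot]
  have hid : (7*(m:ℝ)-8)^2 + ((m:ℝ)-1) * (6*(m:ℝ)-8)^2
      = (((m:ℝ)-1)^2 + ((m:ℝ)-1)) + (m:ℝ) * μ^2 := by rw [hμ]; ring
  rw [hid]
  linarith

/-- machine index function for the near-optimal allocation, m ≥ 4 -/
def bF (m i : ℕ) : ℕ :=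
  if i = 0 then 0
  else if i = 1 ∨ i = 6 then 1
  else if i = 2 ∨ i = m + 3 then 2
  else if i ≤ 5 then 3
  else if i < m + 3 then i - 3
  else 2*m + 3 - i

lemma bF_lt (m : ℕ) (hm : 4 ≤ m) (i : ℕ) (hi : i < 2*m) : bF m i < m := by
  unfold bF; split_ifs <;> omega

def instB (m : ℕ) (hm : 4 ≤ m) : Fin (2*m) → Fin m :=
  fun i => ⟨bF m i.1, bF_lt m hm i.1 i.isLt⟩

/-- machine index function for the near-optimal allocation, m = 3 -/
def b3F (i : ℕ) : ℕ := if i = 0 then 0 else if i ≤ 2 then 1 else 2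

lemma b3F_lt (m : ℕ) (hm : 3 ≤ m) (i : ℕ) : b3F i < m := by
  unfold b3F; split_ifs <;> omega

def instB3 (m : ℕ) (hm : 3 ≤ m) : Fin (2*m) → Fin m :=
  fun i => ⟨b3F i.1, b3F_lt m hm i.1⟩

lemma optB (m : ℕ) (hm : 3 ≤ m) :
    ∃ B : Fin (2*m) → Fin m, ∀ v, load (2*m) m (instW m) B v ≤ 6*(m:ℝ) - 6 := by
  have hm' : (3:ℝ) ≤ (m:ℝ) := by exact_mod_cast hm
  rcases eq_or_lt_of_le hm with hm3 | hm4
  · -- m = 3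
    refine ⟨instB3 m hm, fun v => ?_⟩
    have hv := v.isLt
    unfold load
    rcases (by omega : v.1 = 0 ∨ v.1 = 1 ∨ v.1 = 2) with h | h | h
    · have hfilt : (univ.filter (fun i => instB3 m hm i = v))
          = {(⟨0, by omega⟩ : Fin (2*m))} := by
        ext i
        have hi := i.isLt
        simp only [mem_filter, mem_univ, true_and, mem_singleton, instB3, Fin.ext_iff]
        show b3F i.1 = v.1 ↔ i.1 = 0
        unfold b3F; split_ifs <;> omega
      rw [hfilt, Finset.sum_singleton]
      simp only [instW, wF]
      norm_num
      linarith
    · have hfilt : (univ.filter (fun i => instB3 m hm i = v))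
          = {(⟨1, by omega⟩ : Fin (2*m)), ⟨2, by omega⟩} := by
        ext i
        have hi := i.isLt
        simp only [mem_filter, mem_univ, true_and, mem_insert, mem_singleton, instB3, Fin.ext_iff]
        show b3F i.1 = v.1 ↔ i.1 = 1 ∨ i.1 = 2
        unfold b3F; split_ifs <;> omega
      rw [hfilt, Finset.sum_pair (by simp only [ne_eq, Fin.mk.injEq]; omega)]
      simp only [instW, wF]
      norm_num
      have hm3' : (m:ℝ) = 3 := by exact_mod_cast hm3.symm
      rw [hm3']; norm_num
    · have hfilt : (univ.filter (fun i => instB3 m hm i = v))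
          = {(⟨3, by omega⟩ : Fin (2*m)), ⟨4, by omega⟩, ⟨5, by omega⟩} := by
        ext i
        have hi := i.isLt
        have h2m : 2*m = 6 := by omega
        simp only [mem_filter, mem_univ, true_and, mem_insert, mem_singleton, instB3, Fin.ext_iff]
        show b3F i.1 = v.1 ↔ i.1 = 3 ∨ i.1 = 4 ∨ i.1 = 5
        unfold b3F; split_ifs <;> omega
      rw [hfilt]
      rw [Finset.sum_insert (by simp only [mem_insert, mem_singleton, ne_eq, Fin.mk.injEq]; omega),
        Finset.sum_pair (by simp only [ne_eq, Fin.mk.injEq]; omega)]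
      simp only [instW, wF]
      norm_num
      linarith
  · -- m ≥ 4
    have hm4 : 4 ≤ m := hm4
    refine ⟨instB m hm4, fun v => ?_⟩
    have hv := v.isLt
    unfold load
    by_cases h0 : v.1 = 0
    · have hfilt : (univ.filter (fun i => instB m hm4 i = v)) = {(⟨0, by omega⟩ : Fin (2*m))} := by
        ext i
        have hi := i.isLt
        simp only [mem_filter, mem_univ, true_and, mem_singleton, instB, Fin.ext_iff]
        show bF m i.1 = v.1 ↔ i.1 = 0
        unfold bF; split_ifs <;> omega
      rw [hfilt, Finset.sum_singleton]
      simp only [instW, wF]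
      norm_num
      linarith
    · rcases (by omega : v.1 = 1 ∨ v.1 = 2 ∨ v.1 = 3 ∨ 4 ≤ v.1) with h | h | h | h
      · have hfilt : (univ.filter (fun i => instB m hm4 i = v))
            = {(⟨1, by omega⟩ : Fin (2*m)), ⟨6, by omega⟩} := by
          ext i
          have hi := i.isLt
          simp only [mem_filter, mem_univ, true_and, mem_insert, mem_singleton, instB, Fin.ext_iff]
          show bF m i.1 = v.1 ↔ i.1 = 1 ∨ i.1 = 6
          unfold bF; split_ifs <;> omega
        rw [hfilt, Finset.sum_pair (by simp only [ne_eq, Fin.mk.injEq]; omega)]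
        simp only [instW, wF]
        have h6 : ¬ (6:ℕ) ≤ 5 := by omega
        split_ifs <;> first | (exfalso; omega) | contradiction | (push_cast; linarith)
      · have hfilt : (univ.filter (fun i => instB m hm4 i = v))
            = {(⟨2, by omega⟩ : Fin (2*m)), ⟨m+3, by omega⟩} := by
          ext i
          have hi := i.isLt
          simp only [mem_filter, mem_univ, true_and, mem_insert, mem_singleton, instB, Fin.ext_iff]
          show bF m i.1 = v.1 ↔ i.1 = 2 ∨ i.1 = m+3
          unfold bF; split_ifs <;> omega
        rw [hfilt, Finset.sum_pair (by simp only [ne_eq, Fin.mk.injEq]; omega)]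
        simp only [instW, wF]
        split_ifs <;> first | (exfalso; omega) | contradiction | (push_cast; linarith)
      · have hfilt : (univ.filter (fun i => instB m hm4 i = v))
            = {(⟨3, by omega⟩ : Fin (2*m)), ⟨4, by omega⟩, ⟨5, by omega⟩} := by
          ext i
          have hi := i.isLt
          simp only [mem_filter, mem_univ, true_and, mem_insert, mem_singleton, instB, Fin.ext_iff]
          show bF m i.1 = v.1 ↔ i.1 = 3 ∨ i.1 = 4 ∨ i.1 = 5
          unfold bF; split_ifs <;> omega
        rw [hfilt]
        rw [Finset.sum_insert (by simp only [mem_insert, mem_singleton, ne_eq, Fin.mk.injEq]; omega),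
          Finset.sum_pair (by simp only [ne_eq, Fin.mk.injEq]; omega)]
        simp only [instW, wF]
        norm_num
        linarith
      · have hfilt : (univ.filter (fun i => instB m hm4 i = v))
            = {(⟨v.1+3, by omega⟩ : Fin (2*m)), ⟨2*m+3-v.1, by omega⟩} := by
          ext i
          have hi := i.isLt
          simp only [mem_filter, mem_univ, true_and, mem_insert, mem_singleton, instB, Fin.ext_iff]
          show bF m i.1 = v.1 ↔ i.1 = v.1+3 ∨ i.1 = 2*m+3-v.1
          unfold bF; split_ifs <;> omega
        rw [hfilt, Finset.sum_pair (by simp only [ne_eq, Fin.mk.injEq]; omega)]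
        have hcast : ((2*m + 3 - v.1 : ℕ) : ℝ) = 2*(m:ℝ) + 3 - (v.1:ℝ) := by
          push_cast [Nat.cast_sub (by omega : v.1 ≤ 2*m+3)]
          ring
        have hw1 : wF m (v.1+3) = 2*(m:ℝ)+2*(v.1:ℝ) - 6 := by
          unfold wF
          split_ifs <;> first | (exfalso; omega) | contradiction | (push_cast; ring)
        have hw2 : wF m (2*m+3-v.1) = 4*(m:ℝ) - 2*(v.1:ℝ) := by
          unfold wF
          split_ifs <;> first | (exfalso; omega) | contradiction | (rw [hcast]; push_cast; ring)
        show wF m (v.1+3) + wF m (2*m+3-v.1) ≤ _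
        rw [hw1, hw2]
        linarith

/-- For every `m ≥ 3` there is an instance on `m` machines and a
potential-optimal allocation whose makespan is at least `((7m − 8)/(6m − 6)) · OPT`. -/
theorem irse_lower_bound_m_machines (m : ℕ) (hm : 3 ≤ m) :
    ∃ (n : ℕ) (w : Fin n → ℝ) (A : Fin n → Fin m),
      (∀ i, 0 < w i) ∧
      (∀ B : Fin n → Fin m, potential n m w A ≤ potential n m w B) ∧
      ((7 * (m : ℝ) - 8) / (6 * (m : ℝ) - 6)) * optMakespan n m w ≤ makespan n m w A := by
  have hm' : (3:ℝ) ≤ (m:ℝ) := by exact_mod_cast hm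
  haveI : Nonempty (Fin m) := ⟨⟨0, by omega⟩⟩
  refine ⟨2*m, instW m, instA m hm, fun i => wF_pos m hm i.1, fun B => ?_, ?_⟩
  · rw [potA m hm]
    exact potB_ge m hm B
  · -- makespan of A is at least 7m-8
    have hmakeA : (7*(m:ℝ) - 8) ≤ makespan (2*m) m (instW m) (instA m hm) := by
      have h := le_ciSup (f := fun j => load (2*m) m (instW m) (instA m hm) j)
        (Set.Finite.bddAbove (Set.finite_range _)) (⟨0, by omega⟩ : Fin m)
      rw [loadA m hm ⟨0, by omega⟩] at h
      simpa [makespan] using h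
    -- every makespan is nonnegative
    have hnn : ∀ B : Fin (2*m) → Fin m, 0 ≤ makespan (2*m) m (instW m) B := by
      intro B
      have h := le_ciSup (f := fun j => load (2*m) m (instW m) B j)
        (Set.Finite.bddAbove (Set.finite_range _)) (⟨0, by omega⟩ : Fin m)
      have h0 : (0:ℝ) ≤ load (2*m) m (instW m) B ⟨0, by omega⟩ := by
        unfold load
        exact Finset.sum_nonneg fun i _ => le_of_lt (wF_pos m hm i.1)
      exact le_trans h0 h
    -- optimal makespan is at most 6m-6
    have hopt : optMakespan (2*m) m (instW m) ≤ 6*(m:ℝ) - 6 := by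
      obtain ⟨B, hB⟩ := optB m hm
      have h1 : optMakespan (2*m) m (instW m) ≤ makespan (2*m) m (instW m) B :=
        ciInf_le ⟨0, fun x hx => by obtain ⟨B', rfl⟩ := hx; exact hnn B'⟩ B
      exact le_trans h1 (ciSup_le hB)
    have hc : 0 ≤ (7*(m:ℝ) - 8) / (6*(m:ℝ) - 6) :=
      div_nonneg (by linarith) (by linarith)
    calc (7*(m:ℝ) - 8) / (6*(m:ℝ) - 6) * optMakespan (2*m) m (instW m)
        ≤ (7*(m:ℝ) - 8) / (6*(m:ℝ) - 6) * (6*(m:ℝ) - 6) :=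
          mul_le_mul_of_nonneg_left hopt hc
      _ = 7*(m:ℝ) - 8 := div_mul_cancel₀ _ (by linarith)
      _ ≤ makespan (2*m) m (instW m) (instA m hm) := hmakeA
end

section
/- Every potential-optimal allocation is a pure Nash equilibrium of the load balancing game: if A is a potential-optimal allocation, then for every job i and every machine b, l_{A(i)}(A) − w_i ≤ l_b(A). -/
open Finset

/-- Every potential-optimal allocation is a pure Nash equilibrium:
no job can strictly decrease its cost by moving to another machine. -/
theorem potential_optimal_is_nash (n m : ℕ) (w : Fin n → ℝ) (hw : ∀ i, 0 < w i)
    (A : Fin n → Fin m)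
    (hA : ∀ B : Fin n → Fin m, potential n m w A ≤ potential n m w B)
    (i : Fin n) (b : Fin m) :
    load n m w A (A i) - w i ≤ load n m w A b := by
  set a := A i with ha
  by_cases hab : b = a
  · subst hab; linarith [hw i]
  set B := Function.update A i b with hB
  have hdiff : ∀ j, load n m w B j = load n m w A j
      + (if j = b then w i else 0) - (if j = a then w i else 0) := by
    intro j
    unfold load
    rw [Finset.sum_filter, Finset.sum_filter]
    rw [← Finset.sum_erase_add _ _ (Finset.mem_univ i),
        ← Finset.sum_erase_add _ _ (Finset.mem_univ i)]
    have h1 : ∀ i' ∈ Finset.univ.erase i,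
        (if B i' = j then w i' else 0) = (if A i' = j then w i' else 0) := by
      intro i' hi'
      rw [hB, Function.update_of_ne (Finset.ne_of_mem_erase hi')]
    rw [Finset.sum_congr rfl h1]
    have hBi : B i = b := Function.update_self i b A
    rw [hBi]
    have e1 : (if b = j then w i else 0) = (if j = b then w i else 0) := by
      by_cases h : b = j
      · simp [h]
      · simp [h, Ne.symm h]
    have e2 : (if A i = j then w i else 0) = (if j = a then w i else 0) := by
      rw [ha]
      by_cases h : A i = j
      · simp [h]
      · simp [h, Ne.symm h]
    rw [e1, e2]; ring
  have hterm : ∀ j, (load n m w B j) ^ 2 = (load n m w A j) ^ 2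
      + (if j = b then 2 * load n m w A j * w i + (w i) ^ 2 else 0)
      + (if j = a then -(2 * load n m w A j * w i) + (w i) ^ 2 else 0) := by
    intro j
    rw [hdiff j]
    rcases eq_or_ne j b with rfl | hjb
    · simp [hab]; ring
    · rcases eq_or_ne j a with rfl | hja
      · simp [hjb]; ring
      · simp [hjb, hja]
  have hpot : potential n m w B = potential n m w A
      + (2 * load n m w A b * w i + (w i) ^ 2)
      + (-(2 * load n m w A a * w i) + (w i) ^ 2) := by
    unfold potential
    rw [Finset.sum_congr rfl (fun j _ => hterm j)]
    rw [Finset.sum_add_distrib, Finset.sum_add_distrib,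
        Finset.sum_ite_eq' Finset.univ b, Finset.sum_ite_eq' Finset.univ a]
    simp
  have := hA B
  have hwi := hw i
  nlinarith [this, hpot]
end

section
/- Bundle-swap property of potential optima: let A be a potential-optimal allocation, let a ≠ b be machines, let S be a subset of the jobs assigned to a and T a subset of the jobs assigned to b, and write w(S), w(T) for the total weights of these bundles. If w(S) < w(T), then l_a(A) − w(S) ≥ l_b(A) − w(T). -/
open Finset

/-- Bundle-swap property of potential optima: if a bundle `S` on machine `a`
is strictly lighter than a bundle `T` on machine `b`, then `l_a − w(S) ≥ l_b − w(T)`. -/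
theorem bundle_swap (n m : ℕ) (w : Fin n → ℝ) (hw : ∀ i, 0 < w i)
    (A : Fin n → Fin m)
    (hA : ∀ B : Fin n → Fin m, potential n m w A ≤ potential n m w B)
    (a b : Fin m) (hab : a ≠ b)
    (S T : Finset (Fin n))
    (hS : ∀ i ∈ S, A i = a) (hT : ∀ i ∈ T, A i = b)
    (hlt : ∑ i ∈ S, w i < ∑ i ∈ T, w i) :
    load n m w A a - ∑ i ∈ S, w i ≥ load n m w A b - ∑ i ∈ T, w i := by
  classical
  set B : Fin n → Fin m := fun i => if i ∈ S then b else if i ∈ T then a else A i with hB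
  have hST : Disjoint S T := by
    rw [Finset.disjoint_left]
    intro i hiS hiT
    exact hab ((hS i hiS).symm.trans (hT i hiT))
  have hSsub : S ⊆ Finset.univ.filter (fun i => A i = a) := fun i hi =>
    Finset.mem_filter.mpr ⟨Finset.mem_univ i, hS i hi⟩
  have hTsub : T ⊆ Finset.univ.filter (fun i => A i = b) := fun i hi =>
    Finset.mem_filter.mpr ⟨Finset.mem_univ i, hT i hi⟩
  have hfa : Finset.univ.filter (fun i => B i = a) =
      (Finset.univ.filter (fun i => A i = a) \ S) ∪ T := by
    ext i
    by_cases hiS : i ∈ S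
    · simp [hB, hiS, Ne.symm hab, Finset.disjoint_left.mp hST hiS]
    · by_cases hiT : i ∈ T
      · simp [hB, hiS, hiT]
      · simp [hB, hiS, hiT]
  have hfb : Finset.univ.filter (fun i => B i = b) =
      (Finset.univ.filter (fun i => A i = b) \ T) ∪ S := by
    ext i
    by_cases hiS : i ∈ S
    · simp [hB, hiS, Finset.disjoint_left.mp hST hiS]
    · by_cases hiT : i ∈ T
      · simp [hB, hiS, hiT, hab, hT i hiT]
      · simp [hB, hiS, hiT]
  have hd1 : Disjoint (Finset.univ.filter (fun i => A i = a) \ S) T := by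
    rw [Finset.disjoint_right]
    intro i hiT hmem
    obtain ⟨hf, -⟩ := Finset.mem_sdiff.mp hmem
    exact hab (((Finset.mem_filter.mp hf).2).symm.trans (hT i hiT))
  have hd2 : Disjoint (Finset.univ.filter (fun i => A i = b) \ T) S := by
    rw [Finset.disjoint_right]
    intro i hiS hmem
    obtain ⟨hf, -⟩ := Finset.mem_sdiff.mp hmem
    exact hab (((hS i hiS).symm.trans (Finset.mem_filter.mp hf).2))
  have hla : load n m w B a = (load n m w A a - ∑ i ∈ S, w i) + ∑ i ∈ T, w i := by
    rw [load, hfa, Finset.sum_union hd1, Finset.sum_sdiff_eq_sub hSsub, load]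
  have hlb : load n m w B b = (load n m w A b - ∑ i ∈ T, w i) + ∑ i ∈ S, w i := by
    rw [load, hfb, Finset.sum_union hd2, Finset.sum_sdiff_eq_sub hTsub, load]
  have hother : ∀ j, j ≠ a → j ≠ b → load n m w B j = load n m w A j := by
    intro j hja hjb
    unfold load
    apply Finset.sum_congr _ (fun _ _ => rfl)
    ext i
    by_cases hiS : i ∈ S
    · simp [hB, hiS, Ne.symm hjb, hS i hiS, Ne.symm hja]
    · by_cases hiT : i ∈ T
      · simp [hB, hiS, hiT, Ne.symm hja, hT i hiT, Ne.symm hjb]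
      · simp [hB, hiS, hiT]
  have key : potential n m w B - potential n m w A =
      (load n m w B a) ^ 2 + (load n m w B b) ^ 2
        - (load n m w A a) ^ 2 - (load n m w A b) ^ 2 := by
    unfold potential
    rw [← Finset.sum_sub_distrib]
    have hsub := Finset.sum_subset (Finset.subset_univ ({a, b} : Finset (Fin m)))
      (f := fun j => (load n m w B j) ^ 2 - (load n m w A j) ^ 2)
      (fun j _ hj => by
        simp only [Finset.mem_insert, Finset.mem_singleton, not_or] at hj
        simp only [hother j hj.1 hj.2]; ring)
    rw [← hsub, Finset.sum_pair hab]
    ring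
  have hpot := hA B
  have h0 : 0 ≤ (load n m w B a) ^ 2 + (load n m w B b) ^ 2
      - (load n m w A a) ^ 2 - (load n m w A b) ^ 2 := by
    rw [← key]; linarith
  rw [hla, hlb] at h0
  nlinarith [h0, hlt]
end

section
/- Let A be a potential-optimal allocation of an instance whose optimal makespan OPT equals 1. Suppose the maximum load of A is 1 + α with α > 1/3, attained on a machine (call it machine 1) that holds at least two jobs, and let α + β be the weight of the smallest job on machine 1. Then every machine j satisfies l_j(A) ≥ 1 − β. -/
open Finset

/-- Let `A` be potential optimal with `OPT = 1`, maximum load `1 + α` with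
`α > 1/3` attained on machine `m1` holding at least two jobs, and let `α + β` be the
weight of the smallest job `s` on `m1`. Then every machine has load at least `1 − β`. -/
theorem all_loads_large (n m : ℕ) (w : Fin n → ℝ) (hw : ∀ i, 0 < w i)
    (A : Fin n → Fin m)
    (hpo : ∀ B : Fin n → Fin m, potential n m w A ≤ potential n m w B)
    (hopt : optMakespan n m w = 1)
    (α : ℝ) (hα : 1 / 3 < α)
    (m1 : Fin m)
    (hload : load n m w A m1 = 1 + α)
    (hmax : makespan n m w A = 1 + α)
    (htwo : ∃ i j : Fin n, i ≠ j ∧ A i = m1 ∧ A j = m1)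
    (s : Fin n) (hs : A s = m1) (hsmin : ∀ i : Fin n, A i = m1 → w s ≤ w i)
    (β : ℝ) (hβ : w s = α + β) :
    ∀ j : Fin m, 1 - β ≤ load n m w A j := by
  intro j
  have hws : 0 < w s := hw s
  by_cases hj : j = m1
  · rw [hj, hload]; nlinarith
  · -- move job s from m1 to j
    set B : Fin n → Fin m := Function.update A s j with hB
    have hdiff : ∀ k, load n m w B k - load n m w A k =
        (if j = k then w s else 0) - (if m1 = k then w s else 0) := by
      intro k
      rw [load, load, Finset.sum_filter, Finset.sum_filter, ← Finset.sum_sub_distrib,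
        Finset.sum_eq_single s]
      · simp [hB, Function.update_self, hs]
      · intro i _ hi
        simp [hB, Function.update_of_ne hi]
      · simp
    have hpot := hpo B
    rw [potential, potential] at hpot
    have hsum : ∑ k, ((load n m w B k) ^ 2 - (load n m w A k) ^ 2) =
        ((load n m w B j) ^ 2 - (load n m w A j) ^ 2) +
        ((load n m w B m1) ^ 2 - (load n m w A m1) ^ 2) := by
      rw [← Finset.sum_pair (f := fun k => (load n m w B k) ^ 2 - (load n m w A k) ^ 2) (show j ≠ m1 from hj)]
      apply (Finset.sum_subset (Finset.subset_univ _) _).symm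
      intro k _ hk
      have hk1 : j ≠ k := fun h => hk (by simp [h.symm])
      have hk2 : m1 ≠ k := fun h => hk (by simp [h.symm])
      have := hdiff k
      rw [if_neg hk1, if_neg hk2] at this
      have : load n m w B k = load n m w A k := by linarith
      rw [this]; ring
    have hBj : load n m w B j = load n m w A j + w s := by
      have := hdiff j
      rw [if_pos rfl, if_neg (Ne.symm hj)] at this
      linarith
    have hBm1 : load n m w B m1 = load n m w A m1 - w s := by
      have := hdiff m1
      rw [if_neg hj, if_pos rfl] at this
      linarith
    have h0 : 0 ≤ ∑ k, ((load n m w B k) ^ 2 - (load n m w A k) ^ 2) := by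
      rw [Finset.sum_sub_distrib]; linarith
    rw [hsum, hBj, hBm1, hload] at h0
    nlinarith
end

section
/- Let α, β, x, y, z, l be real numbers with 1/3 < α, 0 < β < α, β ≤ x ≤ y ≤ 1/3, x + y ≥ α + β, 1 − α − β ≤ z, 0 ≤ z, y + z ≤ l, 0 ≤ l, and l < 1. Then (1 + α)² + (x + y + z)² + l² > (1 − β + y)² + (z + α + β)² + (l + x)². -/
/-- The rearrangement in the proof of the `4/3` upper bound strictly
decreases the potential, in the case `x ≤ y`. -/
theorem potential_decrease_x_le_y (α β x y z l : ℝ)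
    (hα : 1 / 3 < α) (hβ0 : 0 < β) (hβα : β < α)
    (hβx : β ≤ x) (hxy : x ≤ y) (hy : y ≤ 1 / 3)
    (hxyαβ : α + β ≤ x + y)
    (hz : 1 - α - β ≤ z) (hz0 : 0 ≤ z)
    (hyzl : y + z ≤ l) (hl0 : 0 ≤ l) (hl : l < 1) :
    (1 + α) ^ 2 + (x + y + z) ^ 2 + l ^ 2 >
      (1 - β + y) ^ 2 + (z + α + β) ^ 2 + (l + x) ^ 2 := by
  have h1 : 0 < x * (1 - l) :=
    mul_pos (lt_of_lt_of_le hβ0 hβx) (by linarith)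
  have h2 : 0 ≤ (α - x) * (α - y + β) :=
    mul_nonneg (by linarith) (by linarith)
  have h3 : 0 ≤ (x + y - α - β) * (z - (1 - α - β)) :=
    mul_nonneg (by linarith) (by linarith)
  nlinarith [h1, h2, h3]
end

section
/- Let α, β, x, y, z, l be real numbers with 1/3 < α, 0 < β < α, 0 < y < x, y ≤ 1/3, β ≤ x, x + y ≥ α + β, 1 − α − β ≤ z, 0 ≤ z, x + z ≤ l, 0 ≤ l, and l < 1. Then (1 + α)² + (x + y + z)² + l² > (1 − β + x)² + (z + α + β)² + (l + y)². -/
/-- The rearrangement in the proof of the `4/3` upper bound strictly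
decreases the potential, in the case `y < x`. -/
theorem potential_decrease_y_lt_x (α β x y z l : ℝ)
    (hα : 1 / 3 < α) (hβ0 : 0 < β) (hβα : β < α)
    (hy0 : 0 < y) (hyx : y < x) (hy : y ≤ 1 / 3) (hβx : β ≤ x)
    (hxyαβ : α + β ≤ x + y)
    (hz : 1 - α - β ≤ z) (hz0 : 0 ≤ z)
    (hxzl : x + z ≤ l) (hl0 : 0 ≤ l) (hl : l < 1) :
    (1 + α) ^ 2 + (x + y + z) ^ 2 + l ^ 2 >
      (1 - β + x) ^ 2 + (z + α + β) ^ 2 + (l + y) ^ 2 := by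
  have he : 0 < α + β - x := by linarith
  have h1 : 0 < y * (1 - l) := mul_pos hy0 (by linarith)
  have h2 : 0 ≤ (x + y - α - β) * (z - (1 - α - β)) :=
    mul_nonneg (by linarith) (by linarith)
  have h3 : 0 < (α + β - x) * (α - y) := mul_pos he (by linarith)
  nlinarith [h1, h2, h3]
end

section
/- Let α, β be real numbers with α > 1/3, 0 < β < α, and β ≤ (1 − α)/2. Suppose a finite collection of jobs with positive real weights can be partitioned into m groups G_1, …, G_m such that: every job in G_1 has weight strictly greater than α; the total weight of G_1 equals 1 + α; and every group G_j (including G_1) contains either a job of weight at least 1 − β or two jobs each of weight strictly greater than α. Then every allocation of these jobs to m machines has makespan strictly greater than 1. -/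
open Finset

/-- Counting argument deriving the contradiction with `OPT = 1`:
if the jobs can be partitioned into `m` groups (fibers of `P`) such that every job of
group `G_1 = P⁻¹(g1)` weighs strictly more than `α`, group `G_1` has total weight `1 + α`,
and every group contains a job of weight at least `1 − β` or two jobs of weight strictly
greater than `α`, then every allocation to `m` machines has makespan strictly above `1`. -/
theorem counting_contradiction (α β : ℝ)
    (hα : 1 / 3 < α) (hβ0 : 0 < β) (hβα : β < α) (hβ : β ≤ (1 - α) / 2)
    (n m : ℕ) (w : Fin n → ℝ) (hw : ∀ i, 0 < w i)
    (P : Fin n → Fin m) (g1 : Fin m)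
    (hG1 : ∀ i : Fin n, P i = g1 → α < w i)
    (hG1w : ∑ i ∈ Finset.univ.filter (fun i => P i = g1), w i = 1 + α)
    (hall : ∀ j : Fin m,
      (∃ i : Fin n, P i = j ∧ 1 - β ≤ w i) ∨
      (∃ i i' : Fin n, i ≠ i' ∧ P i = j ∧ P i' = j ∧ α < w i ∧ α < w i')) :
    ∀ A : Fin n → Fin m, 1 < makespan n m w A := by

  intro A
  by_contra hcon
  push_neg at hcon
  -- basic facts
  have hα1 : α < 1 := by linarith
  have hlba : α < (1 + α) / 2 := by linarith
  have hlbβ : (1 + α) / 2 ≤ 1 - β := by linarith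
  have hm : 0 < m := g1.pos
  haveI : Nonempty (Fin m) := ⟨g1⟩
  -- every machine load is at most 1
  have hload : ∀ j : Fin m, load n m w A j ≤ 1 := by
    intro j
    refine le_trans ?_ hcon
    exact le_ciSup (Set.Finite.bddAbove (Set.finite_range _)) j
  -- sums of weights of jobs on a common machine are at most 1
  have hsub : ∀ (j : Fin m) (s : Finset (Fin n)), (∀ i ∈ s, A i = j) →
      ∑ i ∈ s, w i ≤ 1 := by
    intro j s hs
    refine le_trans ?_ (hload j)
    unfold load
    refine Finset.sum_le_sum_of_subset_of_nonneg ?_ (fun i _ _ => (hw i).le)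
    intro i hi
    exact Finset.mem_filter.2 ⟨Finset.mem_univ i, hs i hi⟩
  -- every job weighs at most 1
  have hw1 : ∀ i : Fin n, w i ≤ 1 := by
    intro i
    have := hsub (A i) {i} (by simp)
    simpa using this
  -- big and large jobs
  set Big : Finset (Fin n) := Finset.univ.filter (fun i => α < w i) with hBig
  set Large : Finset (Fin n) := Finset.univ.filter (fun i => (1 + α) / 2 ≤ w i) with hLarge
  have hLB : Large ⊆ Big := by
    intro i hi
    simp only [hBig, hLarge, Finset.mem_filter, Finset.mem_univ, true_and] at *
    linarith
  -- machine-side bound: each machine carries (big count) + (large count) ≤ 2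
  have hmach : ∀ j : Fin m,
      (Big.filter (fun i => A i = j)).card + (Large.filter (fun i => A i = j)).card ≤ 2 := by
    intro j
    have hLBf : Large.filter (fun i => A i = j) ⊆ Big.filter (fun i => A i = j) := by
      intro i hi
      rcases Finset.mem_filter.1 hi with ⟨h1, h2⟩
      exact Finset.mem_filter.2 ⟨hLB h1, h2⟩
    rcases (Large.filter (fun i => A i = j)).eq_empty_or_nonempty with hL | hL
    · -- no large job: at most 2 big jobs
      rw [hL, Finset.card_empty]
      by_contra hc
      push_neg at hc
      have h3 : 3 ≤ (Big.filter (fun i => A i = j)).card := by omega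
      obtain ⟨t, hts, htc⟩ := Finset.exists_subset_card_eq h3
      have htne : t.Nonempty := by
        rw [← Finset.card_pos, htc]; norm_num
      have hlow : ∑ i ∈ t, α < ∑ i ∈ t, w i := by
        refine Finset.sum_lt_sum_of_nonempty htne ?_
        intro i hi
        have := hts hi
        rw [Finset.mem_filter, hBig, Finset.mem_filter] at this
        exact this.1.2
      have hup : ∑ i ∈ t, w i ≤ 1 := by
        refine hsub j t ?_
        intro i hi
        have := hts hi
        rw [Finset.mem_filter] at this
        exact this.2
      rw [Finset.sum_const, htc] at hlow
      simp only [nsmul_eq_mul, Nat.cast_ofNat] at hlow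
      linarith
    · -- a large job prevents any other big job
      obtain ⟨u, hu⟩ := hL
      have hBle : (Big.filter (fun i => A i = j)).card ≤ 1 := by
        by_contra hc
        push_neg at hc
        obtain ⟨a, ha, b, hb, hab⟩ := Finset.one_lt_card.1 hc
        set v := if u = a then b else a with hv
        have hvB : v ∈ Big.filter (fun i => A i = j) := by
          rw [hv]; split <;> assumption
        have hvu : v ≠ u := by
          rw [hv]; split
          · rename_i h; rw [← h] at hab; exact fun hh => hab hh.symm
          · rename_i h; exact fun hh => h hh.symm
        have huL : (1 + α) / 2 ≤ w u := by
          have := Finset.mem_filter.1 hu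
          have := Finset.mem_filter.1 this.1
          simpa [hLarge] using (Finset.mem_filter.1 (Finset.mem_filter.1 hu).1).2
        have hvb : α < w v := by
          have := Finset.mem_filter.1 (Finset.mem_filter.1 hvB).1
          simpa [hBig] using this.2
        have hsum : ∑ i ∈ ({u, v} : Finset (Fin n)), w i ≤ 1 := by
          refine hsub j _ ?_
          intro i hi
          rcases Finset.mem_insert.1 hi with h | h
          · subst h; exact (Finset.mem_filter.1 hu).2
          · rw [Finset.mem_singleton] at h; subst h
            exact (Finset.mem_filter.1 hvB).2
        rw [Finset.sum_pair (Ne.symm hvu)] at hsum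
        linarith
      have := Finset.card_le_card hLBf
      omega
  -- total over machines
  have hmtot : Big.card + Large.card ≤ 2 * m := by
    have hB : Big.card = ∑ j : Fin m, (Big.filter (fun i => A i = j)).card :=
      Finset.card_eq_sum_card_fiberwise (fun x _ => Finset.mem_univ (A x))
    have hLc : Large.card = ∑ j : Fin m, (Large.filter (fun i => A i = j)).card :=
      Finset.card_eq_sum_card_fiberwise (fun x _ => Finset.mem_univ (A x))
    calc Big.card + Large.card
        = ∑ j : Fin m, ((Big.filter (fun i => A i = j)).card
            + (Large.filter (fun i => A i = j)).card) := by
          rw [hB, hLc, Finset.sum_add_distrib]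
      _ ≤ ∑ _j : Fin m, 2 := Finset.sum_le_sum (fun j _ => hmach j)
      _ = 2 * m := by simp [Finset.sum_const, Finset.card_univ, mul_comm]
  -- group-side bound: every group has (big count) + (large count) ≥ 2
  have hgrp : ∀ j : Fin m,
      2 ≤ (Big.filter (fun i => P i = j)).card + (Large.filter (fun i => P i = j)).card := by
    intro j
    rcases hall j with ⟨i, hPi, hwi⟩ | ⟨i, i', hne, hPi, hPi', hwi, hwi'⟩
    · have hiL : i ∈ Large.filter (fun x => P x = j) := by
        refine Finset.mem_filter.2 ⟨?_, hPi⟩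
        rw [hLarge, Finset.mem_filter]
        exact ⟨Finset.mem_univ i, by linarith⟩
      have hiB : i ∈ Big.filter (fun x => P x = j) := by
        refine Finset.mem_filter.2 ⟨?_, hPi⟩
        rw [hBig, Finset.mem_filter]
        exact ⟨Finset.mem_univ i, by linarith⟩
      have h1 : 1 ≤ (Big.filter (fun x => P x = j)).card := Finset.card_pos.2 ⟨i, hiB⟩
      have h2 : 1 ≤ (Large.filter (fun x => P x = j)).card := Finset.card_pos.2 ⟨i, hiL⟩
      omega
    · have hpair : ({i, i'} : Finset (Fin n)) ⊆ Big.filter (fun x => P x = j) := by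
        intro x hx
        rcases Finset.mem_insert.1 hx with h | h
        · subst h
          exact Finset.mem_filter.2 ⟨Finset.mem_filter.2 ⟨Finset.mem_univ _, hwi⟩, hPi⟩
        · rw [Finset.mem_singleton] at h; subst h
          exact Finset.mem_filter.2 ⟨Finset.mem_filter.2 ⟨Finset.mem_univ _, hwi'⟩, hPi'⟩
      have := Finset.card_le_card hpair
      rw [Finset.card_pair hne] at this
      omega
  -- group g1 has (big count) + (large count) ≥ 3
  have hg1 : 3 ≤ (Big.filter (fun i => P i = g1)).card
      + (Large.filter (fun i => P i = g1)).card := by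
    set F : Finset (Fin n) := Finset.univ.filter (fun i => P i = g1) with hF
    have hFB : F = Big.filter (fun i => P i = g1) := by
      ext x
      simp only [hF, hBig, Finset.mem_filter, Finset.mem_univ, true_and]
      constructor
      · intro hx; exact ⟨hG1 x hx, hx⟩
      · intro hx; exact hx.2
    rcases (Large.filter (fun i => P i = g1)).eq_empty_or_nonempty with hL | hL
    · -- no large job in G1: G1 has at least 3 jobs
      have hsmall : ∀ i ∈ F, w i < (1 + α) / 2 := by
        intro i hi
        by_contra hc
        push_neg at hc
        have : i ∈ Large.filter (fun x => P x = g1) := by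
          refine Finset.mem_filter.2 ⟨?_, (Finset.mem_filter.1 hi).2⟩
          rw [hLarge, Finset.mem_filter]
          exact ⟨Finset.mem_univ i, hc⟩
        rw [hL] at this
        exact absurd this (Finset.notMem_empty i)
      have hFne : F.Nonempty := by
        rw [← Finset.card_pos]
        by_contra hc
        push_neg at hc
        interval_cases h : F.card
        · have hFe : F = ∅ := Finset.card_eq_zero.1 h
          rw [hFe, Finset.sum_empty] at hG1w
          linarith
      have h3 : 3 ≤ F.card := by
        by_contra hc
        push_neg at hc
        have hlt : ∑ i ∈ F, w i < ∑ i ∈ F, (1 + α) / 2 :=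
          Finset.sum_lt_sum_of_nonempty hFne hsmall
        rw [Finset.sum_const, nsmul_eq_mul] at hlt
        have hcard : (F.card : ℝ) ≤ 2 := by exact_mod_cast Nat.lt_succ_iff.1 hc
        have : ∑ i ∈ F, w i < 1 + α := by nlinarith
        linarith [hG1w]
      rw [← hFB]
      omega
    · -- G1 contains a large job, and at least 2 jobs total
      obtain ⟨u, hu⟩ := hL
      have h2 : 2 ≤ F.card := by
        by_contra hc
        push_neg at hc
        have hle : ∑ i ∈ F, w i ≤ F.card • (1 : ℝ) :=
          Finset.sum_le_card_nsmul F w 1 (fun x _ => hw1 x)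
        rw [nsmul_eq_mul, mul_one] at hle
        have hcard : (F.card : ℝ) ≤ 1 := by exact_mod_cast Nat.lt_succ_iff.1 hc
        rw [hG1w] at hle
        linarith
      have h1 : 1 ≤ (Large.filter (fun i => P i = g1)).card := Finset.card_pos.2 ⟨u, hu⟩
      rw [← hFB]
      omega
  -- total over groups
  have hgtot : 2 * m + 1 ≤ Big.card + Large.card := by
    have hB : Big.card = ∑ j : Fin m, (Big.filter (fun i => P i = j)).card :=
      Finset.card_eq_sum_card_fiberwise (fun x _ => Finset.mem_univ (P x))
    have hLc : Large.card = ∑ j : Fin m, (Large.filter (fun i => P i = j)).card :=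
      Finset.card_eq_sum_card_fiberwise (fun x _ => Finset.mem_univ (P x))
    set f : Fin m → ℕ := fun j => (Big.filter (fun i => P i = j)).card
      + (Large.filter (fun i => P i = j)).card with hf
    have hsumf : Big.card + Large.card = ∑ j : Fin m, f j := by
      rw [hB, hLc, Finset.sum_add_distrib]
    have hsplit : ∑ j : Fin m, f j = f g1 + ∑ j ∈ Finset.univ.erase g1, f j :=
      (Finset.add_sum_erase _ f (Finset.mem_univ g1)).symm
    have herase : 2 * (m - 1) ≤ ∑ j ∈ Finset.univ.erase g1, f j := by
      calc 2 * (m - 1) = ∑ _j ∈ Finset.univ.erase g1, 2 := by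
            rw [Finset.sum_const, Finset.card_erase_of_mem (Finset.mem_univ g1),
              Finset.card_univ, Fintype.card_fin, smul_eq_mul, mul_comm]
        _ ≤ ∑ j ∈ Finset.univ.erase g1, f j :=
            Finset.sum_le_sum (fun j _ => hgrp j)
    have hfg1 : 3 ≤ f g1 := hg1
    rw [hsumf, hsplit]
    omega
  omega
end
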